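/- arXiv:2205.03796 — 7 statements merged into one kernel-verified Lean document; each statement's English description precedes it below -/
import Mathlib

section
/- The number of maximal chains of the type B partition lattice Π^B_n equals (n!)^2. -/
/-- The ground set `{-n, …, -1, 0, 1, …, n}`. -/
def BGround (n : ℕ) := {i : ℤ // i.natAbs ≤ n}

def BGround.neg {n : ℕ} (a : BGround n) : BGround n :=
  ⟨-a.1, by simpa [Int.natAbs_neg] using a.2⟩

def BGround.zero (n : ℕ) : BGround n := ⟨0, by simp⟩

/-- The type B partition lattice `Π^B_n`, modeled as the equivalence relations
(set partitions) `π` of `{-n,…,n}` such that (i) `B ∈ π → -B ∈ π` and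
(ii) if `i` and `-i` lie in a common block then that block contains `0`;
ordered by refinement, with minimum `⊥` (all singletons) and maximum `⊤`
(a single block). -/
def PiB (n : ℕ) : Type :=
  {π : Setoid (BGround n) //
    (∀ a b : BGround n, π.r a b → π.r a.neg b.neg) ∧
    (∀ a : BGround n, π.r a a.neg → π.r a (BGround.zero n))}

instance (n : ℕ) : PartialOrder (PiB n) :=
  Subtype.partialOrder _

-- basic
def BGround.equivFin (m : ℕ) : BGround m ≃ Fin (2 * m + 1) where
  toFun x := ⟨(x.1 + m).toNat, by have := x.2; omega⟩
  invFun k := ⟨(k : ℤ) - m, by have := k.2; omega⟩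
  left_inv x := by cases x with | mk v h => apply Subtype.ext; simp; omega
  right_inv k := by cases k with | mk v h => apply Fin.ext; simp

instance (m : ℕ) : Finite (BGround m) := Finite.of_equiv _ (BGround.equivFin m).symm

lemma BGround.card (m : ℕ) : Nat.card (BGround m) = 2 * m + 1 := by
  rw [Nat.card_congr (BGround.equivFin m), Nat.card_eq_fintype_card, Fintype.card_fin]

@[ext] lemma BGround.ext {m : ℕ} {a b : BGround m} (h : a.1 = b.1) : a = b := Subtype.ext h

lemma BGround.neg_neg {m : ℕ} (a : BGround m) : a.neg.neg = a := by
  apply Subtype.ext; simp [BGround.neg]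

lemma piB_le_iff {n : ℕ} (a b : PiB n) : a ≤ b ↔ a.1 ≤ b.1 := Iff.rfl
lemma piB_lt_iff {n : ℕ} (a b : PiB n) : a < b ↔ a.1 < b.1 := Iff.rfl

/-- number of blocks -/
noncomputable def nb {n : ℕ} (π : PiB n) : ℕ := Nat.card (Quotient π.1)

lemma nb_lt_of_lt {n : ℕ} {π ρ : PiB n} (h : π < ρ) : nb ρ < nb π := by
  classical
  rw [piB_lt_iff, lt_iff_le_and_ne] at h
  obtain ⟨hle, hne⟩ := h
  have hf : Function.Surjective (Setoid.map_of_le hle) := by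
    intro q; induction q using Quotient.ind with
    | _ a => exact ⟨Quotient.mk _ a, rfl⟩
  have hni : ¬ Function.Injective (Setoid.map_of_le hle) := by
    intro hinj
    apply hne
    apply le_antisymm hle
    intro x y hxy
    have : (Quotient.mk π.1 x) = Quotient.mk π.1 y := by
      apply hinj
      exact Quotient.sound hxy
    exact Quotient.exact this
  letI : Fintype (Quotient π.1) := Fintype.ofFinite _
  letI : Fintype (Quotient ρ.1) := Fintype.ofFinite _
  rw [nb, nb, Nat.card_eq_fintype_card, Nat.card_eq_fintype_card]
  exact Fintype.card_lt_of_surjective_not_injective _ hf hni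

lemma nb_le_of_le {n : ℕ} {π ρ : PiB n} (h : π ≤ ρ) : nb ρ ≤ nb π := by
  rcases eq_or_lt_of_le h with rfl | h
  · exact le_rfl
  · exact (nb_lt_of_lt h).le

/-- the negation involution on the quotient -/
noncomputable def qneg {n : ℕ} (π : PiB n) : Quotient π.1 → Quotient π.1 :=
  Quotient.map BGround.neg (fun a b h => π.2.1 a b h)

lemma qneg_invol {n : ℕ} (π : PiB n) : ∀ q, qneg π (qneg π q) = q := by
  intro q; induction q using Quotient.ind with
  | _ a => show Quotient.mk _ _ = _ ; rw [BGround.neg_neg]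

lemma qneg_fixed {n : ℕ} (π : PiB n) (q : Quotient π.1)
    (h : qneg π q = q) : q = Quotient.mk π.1 (BGround.zero n) := by
  induction q using Quotient.ind with
  | _ a =>
    have h2 : π.1.r a a.neg := Quotient.exact h.symm
    exact Quotient.sound (π.2.2 a h2)

lemma nb_odd {n : ℕ} (π : PiB n) : Odd (nb π) := by
  classical
  letI : Fintype (Quotient π.1) := Fintype.ofFinite _
  let f : Function.End (Quotient π.1) := qneg π
  have hf : f ^ 2 ^ 1 = 1 := by
    rw [pow_one, sq]
    exact funext (qneg_invol π)
  have := Equiv.Perm.card_fixedPoints_modEq (p := 2) (n := 1) hf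
  have hcard : Fintype.card f.fixedPoints = 1 := by
    rw [Fintype.card_eq_one_iff]
    refine ⟨⟨Quotient.mk π.1 (BGround.zero n), ?_⟩, ?_⟩
    · show qneg π _ = _
      apply Quotient.sound
      show π.1.r _ _
      have : (BGround.zero n).neg = BGround.zero n := by
        apply Subtype.ext; simp [BGround.neg, BGround.zero]
      rw [this]
    · rintro ⟨q, hq⟩
      apply Subtype.ext
      exact qneg_fixed π q hq
  rw [hcard] at this
  rw [Nat.odd_iff]
  have h2 : Fintype.card (Quotient π.1) % 2 = 1 % 2 := this
  have h3 : nb π = Fintype.card (Quotient π.1) := Nat.card_eq_fintype_card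
  omega

def botB (n : ℕ) : PiB n :=
  ⟨⊥, fun a b h => by
      have : a = b := h
      rw [this],
    fun a h => by
      have h1 : a = a.neg := h
      have h2 : a = BGround.zero n := by
        apply Subtype.ext
        have := congrArg Subtype.val h1
        simp [BGround.neg, BGround.zero] at this ⊢
        omega
      show a = BGround.zero n
      exact h2⟩

def topB (n : ℕ) : PiB n :=
  ⟨⊤, fun _ _ _ => trivial, fun _ _ => trivial⟩

lemma botB_val (n : ℕ) : (botB n).1 = ⊥ := rfl
lemma topB_val (n : ℕ) : (topB n).1 = ⊤ := rfl

lemma nb_botB (n : ℕ) : nb (botB n) = 2 * n + 1 := by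
  have : Function.Bijective (Quotient.mk (botB n).1) := by
    constructor
    · intro a b h
      exact Quotient.exact h
    · intro q; induction q using Quotient.ind with
      | _ a => exact ⟨a, rfl⟩
  rw [nb, ← Nat.card_eq_of_bijective _ this, BGround.card]

lemma nb_topB (n : ℕ) : nb (topB n) = 1 := by
  rw [nb, Nat.card_eq_one_iff_unique]
  constructor
  · constructor
    intro q q'
    induction q using Quotient.ind with
    | _ a =>
      induction q' using Quotient.ind with
      | _ b => exact Quotient.sound trivial
  · exact ⟨Quotient.mk _ (BGround.zero n)⟩

lemma nb_step {n : ℕ} {π ρ : PiB n} (h : π < ρ) : nb ρ + 2 ≤ nb π := by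
  have h1 := nb_lt_of_lt h
  obtain ⟨a, ha⟩ := nb_odd π
  obtain ⟨b, hb⟩ := nb_odd ρ
  omega

lemma nb_chain {n : ℕ} : ∀ (k : ℕ) (e : Fin (k + 1) → PiB n), StrictMono e →
    nb (e (Fin.last k)) + 2 * k ≤ nb (e 0) := by
  intro k
  induction k with
  | zero => intro e _; simp
  | succ k ih =>
    intro e he
    have h1 := ih (fun i => e i.castSucc) (fun i j hij => he (by simpa using hij))
    have h2 : e (Fin.last k).castSucc < e (Fin.last (k+1)) := by
      apply he
      rw [Fin.lt_def]
      simp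
    have h3 := nb_step h2
    have h0 : e (Fin.castSucc 0) = e 0 := by norm_num
    rw [h0] at h1
    omega

def hfunZ (p s x : ℤ) : ℤ :=
  if x = p then s else if x = -p then -s
  else if x.natAbs < p.natAbs then x else if 0 < x then x - 1 else x + 1

def gfunZ (p y : ℤ) : ℤ :=
  if y.natAbs < p.natAbs then y else if 0 < y then y + 1 else y - 1

section
variable {n : ℕ} {p s : ℤ} (hp1 : 1 ≤ p) (hpn : p ≤ n + 1) (hsp : s.natAbs < p.natAbs)
include hp1 hpn hsp
set_option maxHeartbeats 1000000
set_option linter.unusedSectionVars false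

lemma hfunZ_abs : ∀ x : ℤ, x.natAbs ≤ n + 1 → (hfunZ p s x).natAbs ≤ n := by
  intro x hx; unfold hfunZ; split_ifs <;> omega

lemma hfunZ_neg : ∀ x : ℤ, hfunZ p s (-x) = -hfunZ p s x := by
  intro x; unfold hfunZ; split_ifs <;> omega

lemma hfunZ_zero : hfunZ p s 0 = 0 := by
  unfold hfunZ; split_ifs <;> omega

lemma gfunZ_abs : ∀ y : ℤ, y.natAbs ≤ n → (gfunZ p y).natAbs ≤ n + 1 := by
  intro y hy; unfold gfunZ; split_ifs <;> omega

lemma gfunZ_neg : ∀ y : ℤ, gfunZ p (-y) = -gfunZ p y := by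
  intro y; unfold gfunZ; split_ifs <;> omega

lemma gfunZ_zero : gfunZ p 0 = 0 := by
  unfold gfunZ; split_ifs <;> omega

lemma hg_id : ∀ y : ℤ, hfunZ p s (gfunZ p y) = y := by
  intro y; unfold gfunZ hfunZ; split_ifs <;> omega

lemma gh_id : ∀ x : ℤ, x ≠ p → x ≠ -p → gfunZ p (hfunZ p s x) = x := by
  intro x h1 h2; unfold hfunZ gfunZ; split_ifs <;> omega

lemma hfunZ_p : hfunZ p s p = s := by unfold hfunZ; split_ifs <;> omega

lemma hfunZ_s : hfunZ p s s = s := by unfold hfunZ; split_ifs <;> omega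

lemma hfunZ_fib : ∀ x y : ℤ, hfunZ p s x = hfunZ p s y →
    x = y ∨ (x = p ∧ y = s) ∨ (x = s ∧ y = p) ∨ (x = -p ∧ y = -s) ∨ (x = -s ∧ y = -p) ∨
    (s = 0 ∧ (x = p ∨ x = -p ∨ x = 0) ∧ (y = p ∨ y = -p ∨ y = 0)) := by
  intro x y h; unfold hfunZ at h; split_ifs at h <;>
    first
    | (left; omega)
    | (right; left; exact ⟨by omega, by omega⟩)
    | (right; right; left; exact ⟨by omega, by omega⟩)
    | (right; right; right; left; exact ⟨by omega, by omega⟩)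
    | (right; right; right; right; left; exact ⟨by omega, by omega⟩)
    | (right; right; right; right; right; exact ⟨by omega, by omega, by omega⟩)
end

instance (m : ℕ) : Fintype (BGround m) := Fintype.ofEquiv _ (BGround.equivFin m).symm

/-- parameter space for atoms: `p = r+1` is the removed index, `s` the partner. -/
abbrev Pm (N : ℕ) : Type := Σ r : Fin N, BGround r.1

section maps
variable {n : ℕ} (q : Pm (n + 1))

def pz : ℤ := (q.1.1 : ℤ) + 1
def sz : ℤ := q.2.1

lemma pz1 : 1 ≤ pz q := by unfold pz; omega
lemma pzn : pz q ≤ n + 1 := by have := q.1.2; unfold pz; omega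
lemma szp : (sz q).natAbs < (pz q).natAbs := by
  have := q.2.2; unfold sz pz; omega

def hB : BGround (n + 1) → BGround n :=
  fun x => ⟨hfunZ (pz q) (sz q) x.1, hfunZ_abs (pz1 q) (pzn q) (szp q) x.1 x.2⟩

def gB : BGround n → BGround (n + 1) :=
  fun y => ⟨gfunZ (pz q) y.1, gfunZ_abs (pz1 q) (pzn q) (szp q) y.1 y.2⟩

lemma hB_neg (x : BGround (n + 1)) : hB q x.neg = (hB q x).neg :=
  Subtype.ext (hfunZ_neg (pz1 q) (pzn q) (szp q) x.1)

lemma hB_zero : hB q (BGround.zero (n + 1)) = BGround.zero n :=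
  Subtype.ext (hfunZ_zero (pz1 q) (pzn q) (szp q))

lemma gB_neg (y : BGround n) : gB q y.neg = (gB q y).neg :=
  Subtype.ext (gfunZ_neg (pz1 q) (pzn q) (szp q) y.1)

lemma gB_zero : gB q (BGround.zero n) = BGround.zero (n + 1) :=
  Subtype.ext (gfunZ_zero (pz1 q) (pzn q) (szp q))

lemma hB_gB (y : BGround n) : hB q (gB q y) = y :=
  Subtype.ext (hg_id (pz1 q) (pzn q) (szp q) y.1)

def pullB (π : PiB n) : PiB (n + 1) :=
  ⟨Setoid.comap (hB q) π.1,
   fun a b hab => by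
      show π.1.r (hB q a.neg) (hB q b.neg)
      rw [hB_neg, hB_neg]
      exact π.2.1 _ _ hab,
   fun a ha => by
      show π.1.r (hB q a) (hB q (BGround.zero (n+1)))
      rw [hB_zero]
      apply π.2.2
      have : π.1.r (hB q a) (hB q a.neg) := ha
      rwa [hB_neg] at this⟩

def pushB (d : PiB (n + 1)) : PiB n :=
  ⟨Setoid.comap (gB q) d.1,
   fun a b hab => by
      show d.1.r (gB q a.neg) (gB q b.neg)
      rw [gB_neg, gB_neg]
      exact d.2.1 _ _ hab,
   fun a ha => by
      show d.1.r (gB q a) (gB q (BGround.zero n))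
      rw [gB_zero]
      apply d.2.2
      have : d.1.r (gB q a) (gB q a.neg) := ha
      rwa [gB_neg] at this⟩

lemma pullB_rel (π : PiB n) (x y : BGround (n+1)) :
    (pullB q π).1.r x y ↔ π.1.r (hB q x) (hB q y) := Iff.rfl

lemma pullB_le_iff (π π' : PiB n) : pullB q π ≤ pullB q π' ↔ π ≤ π' := by
  constructor
  · intro h a b hab
    have h1 : (pullB q π).1.r (gB q a) (gB q b) := by
      show π.1.r (hB q (gB q a)) (hB q (gB q b))
      rw [hB_gB, hB_gB]; exact hab
    have h3 : π'.1.r (hB q (gB q a)) (hB q (gB q b)) := h h1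
    rwa [hB_gB, hB_gB] at h3
  · intro h a b hab
    exact h hab

lemma pullB_inj (π π' : PiB n) (h : pullB q π = pullB q π') : π = π' :=
  le_antisymm ((pullB_le_iff q _ _).mp h.le) ((pullB_le_iff q _ _).mp h.ge)

lemma pullB_lt_iff (π π' : PiB n) : pullB q π < pullB q π' ↔ π < π' := by
  rw [lt_iff_le_and_ne, lt_iff_le_and_ne, pullB_le_iff]
  constructor
  · rintro ⟨h1, h2⟩
    exact ⟨h1, fun hc => h2 (by rw [hc])⟩
  · rintro ⟨h1, h2⟩
    exact ⟨h1, fun hc => h2 (pullB_inj q _ _ hc)⟩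

lemma pullB_top : pullB q (topB n) = topB (n + 1) :=
  Subtype.ext (Setoid.ext fun _ _ => ⟨fun _ => trivial, fun _ => trivial⟩)

lemma nb_pullB (π : PiB n) : nb (pullB q π) = nb π := by
  have hsurj : Function.Surjective (hB q) := fun y => ⟨gB q y, hB_gB q y⟩
  let φ : Quotient (pullB q π).1 → Quotient π.1 :=
    Quotient.lift (fun x => Quotient.mk π.1 (hB q x)) (fun a b hab => Quotient.sound hab)
  have hbij : Function.Bijective φ := by
    constructor
    · intro u v huv
      induction u using Quotient.ind with
      | _ a =>
        induction v using Quotient.ind with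
        | _ b =>
          apply Quotient.sound
          show π.1.r (hB q a) (hB q b)
          exact Quotient.exact huv
    · intro u
      induction u using Quotient.ind with
      | _ y =>
        obtain ⟨x, hx⟩ := hsurj y
        exact ⟨Quotient.mk _ x, by show Quotient.mk _ (hB q x) = _; rw [hx]⟩
  unfold nb
  exact Nat.card_eq_of_bijective φ hbij

def atomB : PiB (n + 1) := pullB q (botB n)

lemma atomB_rel (x y : BGround (n+1)) :
    (atomB q).1.r x y ↔ hfunZ (pz q) (sz q) x.1 = hfunZ (pz q) (sz q) y.1 := by
  unfold atomB
  rw [pullB_rel]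
  show hB q x = hB q y ↔ _
  constructor
  · intro h; exact congrArg Subtype.val h
  · intro h; exact Subtype.ext h

lemma nb_atomB : nb (atomB q) = 2 * n + 1 := by
  rw [atomB, nb_pullB, nb_botB]

lemma botB_le {m : ℕ} (x : PiB m) : botB m ≤ x := by
  intro a b h
  have : a = b := h
  rw [this]

lemma eq_botB_of_val {m : ℕ} (x : PiB m) (h : x.1 = ⊥) : x = botB m := Subtype.ext h
lemma eq_topB_of_val {m : ℕ} (x : PiB m) (h : x.1 = ⊤) : x = topB m := Subtype.ext h

lemma BGround.zero_neg {m : ℕ} : (BGround.zero m).neg = BGround.zero m := by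
  apply Subtype.ext; simp [BGround.neg, BGround.zero]

/-- every non-bottom element lies above an atom -/
lemma exists_atom_le {n : ℕ} (π : PiB (n + 1)) (hπ : π ≠ botB (n + 1)) :
    ∃ q : Pm (n + 1), atomB q ≤ π := by
  -- first find a related pair with distinct absolute values
  have hne : ∃ u w : BGround (n+1), π.1.r u w ∧ w.1.natAbs < u.1.natAbs := by
    by_contra hcon
    push_neg at hcon
    apply hπ
    apply Subtype.ext
    apply Setoid.ext
    intro a b
    constructor
    · intro hab
      show a = b
      by_contra habne
      have h1 := hcon a b hab
      have h2 := hcon b a (π.1.symm' hab)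
      have h3 : a.1.natAbs = b.1.natAbs := by omega
      have h4 : a.1 = b.1 ∨ a.1 = -b.1 := by omega
      rcases h4 with h4 | h4
      · exact habne (Subtype.ext h4)
      · -- a = b.neg, so Rel b b.neg
        have hab' : π.1.r b b.neg := by
          have : a = b.neg := Subtype.ext h4
          rw [this] at hab
          exact π.1.symm' hab
        have hz : π.1.r b (BGround.zero (n+1)) := π.2.2 b hab'
        have hb0 : b.1 ≠ 0 := by
          intro hb0
          apply habne
          apply Subtype.ext
          omega
        have := hcon b (BGround.zero (n+1)) hz
        simp [BGround.zero] at this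
        omega
    · intro hab
      have : a = b := hab
      rw [this]
  obtain ⟨u, w, hrel, habs⟩ := hne
  -- WLOG u.1 > 0, by replacing (u,w) with their negations
  have main : ∀ u w : BGround (n+1), π.1.r u w → w.1.natAbs < u.1.natAbs →
      0 < u.1 → ∃ q : Pm (n + 1), atomB q ≤ π := by
    clear hrel habs u w
    intro u w hrel habs hupos
    have hu2 := u.2
    have hw2 := w.2
    refine ⟨⟨⟨u.1.natAbs - 1, by omega⟩, ⟨w.1, by simp; omega⟩⟩, ?_⟩
    set q : Pm (n+1) := ⟨⟨u.1.natAbs - 1, by omega⟩, ⟨w.1, by simp; omega⟩⟩ with hqdef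
    have hpz : pz q = u.1 := by unfold pz; simp [hqdef]; omega
    have hsz : sz q = w.1 := rfl
    intro x y hxy
    have hxy' : hfunZ (pz q) (sz q) x.1 = hfunZ (pz q) (sz q) y.1 :=
      (atomB_rel q x y).mp hxy
    have hfib := hfunZ_fib (pz1 q) (pzn q) (szp q) x.1 y.1 hxy'
    have hrelneg : π.1.r u.neg w.neg := π.2.1 u w hrel
    show π.1.r x y
    rcases hfib with h | h | h | h | h | h
    · have : x = y := Subtype.ext h
      rw [this]
    · have hx : x = u := Subtype.ext (by omega)
      have hy : y = w := Subtype.ext (by rw [h.2, hsz])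
      rw [hx, hy]; exact hrel
    · have hx : x = w := Subtype.ext (by rw [h.1, hsz])
      have hy : y = u := Subtype.ext (by omega)
      rw [hx, hy]; exact π.1.symm' hrel
    · have hx : x = u.neg := Subtype.ext (by show x.1 = -u.1; omega)
      have hy : y = w.neg := Subtype.ext (by show y.1 = -w.1; rw [h.2, hsz])
      rw [hx, hy]; exact hrelneg
    · have hx : x = w.neg := Subtype.ext (by show x.1 = -w.1; rw [h.1, hsz])
      have hy : y = u.neg := Subtype.ext (by show y.1 = -u.1; omega)
      rw [hx, hy]; exact π.1.symm' hrelneg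
    · -- s = 0 case
      obtain ⟨hs0, hxk, hyk⟩ := h
      have hw0 : w.1 = 0 := by rw [← hsz]; exact hs0
      have hwzero : w = BGround.zero (n+1) := Subtype.ext hw0
      have h1 : π.1.r u (BGround.zero (n+1)) := by rw [hwzero] at hrel; exact hrel
      have h2 : π.1.r u.neg (BGround.zero (n+1)) := by
        have := hrelneg
        rw [hwzero, BGround.zero_neg] at this
        exact this
      have key : ∀ z : BGround (n+1), (z.1 = pz q ∨ z.1 = -pz q ∨ z.1 = 0) →
          π.1.r z (BGround.zero (n+1)) := by
        intro z hz
        rcases hz with hz | hz | hz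
        · have : z = u := Subtype.ext (by omega)
          rw [this]; exact h1
        · have : z = u.neg := Subtype.ext (by show z.1 = -u.1; omega)
          rw [this]; exact h2
        · have : z = BGround.zero (n+1) := Subtype.ext hz
          rw [this]
      exact π.1.trans' (key x hxk) (π.1.symm' (key y hyk))
  by_cases hu : 0 < u.1
  · exact main u w hrel habs hu
  · apply main u.neg w.neg (π.2.1 u w hrel)
    · show (-w.1).natAbs < (-u.1).natAbs; omega
    · show 0 < -u.1
      have : u.1 ≠ 0 := by omega
      omega

lemma gfunZ_id {p y : ℤ} (h : y.natAbs < p.natAbs) : gfunZ p y = y := by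
  unfold gfunZ; split_ifs <;> omega

def pE {n : ℕ} (q : Pm (n+1)) : BGround (n+1) :=
  ⟨pz q, by have := pzn q; have := pz1 q; omega⟩
def sE {n : ℕ} (q : Pm (n+1)) : BGround (n+1) :=
  ⟨sz q, by have := szp q; have := pzn q; have := pz1 q; omega⟩

lemma atomB_rel_ps {n : ℕ} (q : Pm (n+1)) : (atomB q).1.r (pE q) (sE q) := by
  rw [atomB_rel]
  show hfunZ (pz q) (sz q) (pz q) = hfunZ (pz q) (sz q) (sz q)
  rw [hfunZ_p (pz1 q) (pzn q) (szp q), hfunZ_s (pz1 q) (pzn q) (szp q)]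

lemma pullB_pushB {n : ℕ} (q : Pm (n+1)) (d : PiB (n+1)) (hle : atomB q ≤ d) :
    pullB q (pushB q d) = d := by
  have claim : ∀ x : BGround (n+1), d.1.r (gB q (hB q x)) x := by
    intro x
    by_cases hxp : x.1 = pz q
    · apply hle
      show (atomB q).1.r (gB q (hB q x)) x
      rw [atomB_rel]
      show hfunZ (pz q) (sz q) (gfunZ (pz q) (hfunZ (pz q) (sz q) x.1)) = _
      rw [hxp, hfunZ_p (pz1 q) (pzn q) (szp q), gfunZ_id (szp q),
        hfunZ_s (pz1 q) (pzn q) (szp q)]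
    · by_cases hxm : x.1 = -pz q
      · apply hle
        show (atomB q).1.r (gB q (hB q x)) x
        rw [atomB_rel]
        show hfunZ (pz q) (sz q) (gfunZ (pz q) (hfunZ (pz q) (sz q) x.1)) = _
        have hsneg : (-(sz q)).natAbs < (pz q).natAbs := by have := szp q; omega
        rw [hxm, hfunZ_neg (pz1 q) (pzn q) (szp q), hfunZ_p (pz1 q) (pzn q) (szp q),
          gfunZ_id hsneg, hfunZ_neg (pz1 q) (pzn q) (szp q),
          hfunZ_s (pz1 q) (pzn q) (szp q)]
      · have : gB q (hB q x) = x :=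
          Subtype.ext (gh_id (pz1 q) (pzn q) (szp q) x.1 hxp hxm)
        rw [this]
  apply Subtype.ext
  apply Setoid.ext
  intro x y
  constructor
  · intro hxy
    have hxy' : d.1.r (gB q (hB q x)) (gB q (hB q y)) := hxy
    exact d.1.trans' (d.1.symm' (claim x)) (d.1.trans' hxy' (claim y))
  · intro hxy
    show d.1.r (gB q (hB q x)) (gB q (hB q y))
    exact d.1.trans' (claim x) (d.1.trans' hxy (d.1.symm' (claim y)))

lemma atomB_inj {n : ℕ} (q q' : Pm (n+1)) (h : atomB q = atomB q') : q = q' := by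
  have h1 := atomB_rel_ps q
  rw [h] at h1
  have h2 := (atomB_rel q' _ _).mp h1
  have hfib := hfunZ_fib (pz1 q') (pzn q') (szp q') (pz q) (sz q) h2
  have hb1 := pz1 q
  have hb1' := pz1 q'
  have hs := szp q
  have hs' := szp q'
  have hpp : pz q = pz q' ∧ sz q = sz q' := by
    rcases hfib with h|h|h|h|h|h <;> exact ⟨by omega, by omega⟩
  obtain ⟨hpp, hss⟩ := hpp
  rcases q with ⟨⟨r, hr⟩, ⟨sv, hsv⟩⟩
  rcases q' with ⟨⟨r', hr'⟩, ⟨sv', hsv'⟩⟩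
  simp only [pz, sz] at hpp hss
  obtain rfl : r = r' := by omega
  obtain rfl : sv = sv' := hss
  rfl

lemma BGround.fcard (m : ℕ) : Fintype.card (BGround m) = 2 * m + 1 := by
  rw [← Nat.card_eq_fintype_card, BGround.card]

lemma sum_odd (N : ℕ) : ∑ i ∈ Finset.range N, (2 * i + 1) = N ^ 2 := by
  induction N with
  | zero => simp
  | succ N ih => rw [Finset.sum_range_succ, ih]; ring

lemma Pm_card (N : ℕ) : Nat.card (Pm N) = N ^ 2 := by
  rw [Nat.card_eq_fintype_card, Fintype.card_sigma]
  simp only [BGround.fcard]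
  rw [Fin.sum_univ_eq_sum_range (fun i => 2 * i + 1) N, sum_odd]

abbrev Chn (m : ℕ) : Type :=
  {c : Fin (m + 1) → PiB m //
    StrictMono c ∧ (c 0).1 = ⊥ ∧ (c (Fin.last m)).1 = ⊤}

section chain
variable {n : ℕ}

def Fch (q : Pm (n+1)) (c : Chn n) : Fin (n+2) → PiB (n+1) :=
  Fin.cases (botB (n+1)) (fun j => pullB q (c.1 j))

lemma Fch_zero (q : Pm (n+1)) (c : Chn n) : Fch q c 0 = botB (n+1) := rfl

lemma Fch_succ (q : Pm (n+1)) (c : Chn n) (j : Fin (n+1)) :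
    Fch q c j.succ = pullB q (c.1 j) := by
  unfold Fch
  rw [Fin.cases_succ]

lemma botB_lt_pull (q : Pm (n+1)) (c : Chn n) (j : Fin (n+1)) :
    botB (n+1) < pullB q (c.1 j) := by
  refine lt_of_le_of_ne (botB_le _) ?_
  intro heq
  have h0 : c.1 0 = botB n := eq_botB_of_val _ c.2.2.1
  have h1 : atomB q ≤ pullB q (c.1 j) := by
    rw [atomB, pullB_le_iff, ← h0]
    exact c.2.1.monotone (Fin.zero_le j)
  rw [← heq] at h1
  have h2 := nb_le_of_le h1
  rw [nb_botB, nb_atomB] at h2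
  omega

lemma Fch_strictMono (q : Pm (n+1)) (c : Chn n) : StrictMono (Fch q c) := by
  intro i j hij
  rcases Fin.eq_zero_or_eq_succ i with rfl | ⟨i', rfl⟩ <;>
    rcases Fin.eq_zero_or_eq_succ j with rfl | ⟨j', rfl⟩
  · exact absurd hij (lt_irrefl _)
  · rw [Fch_zero, Fch_succ]
    exact botB_lt_pull q c j'
  · exfalso
    rw [Fin.lt_def] at hij
    simp at hij
  · rw [Fch_succ, Fch_succ, pullB_lt_iff]
    exact c.2.1 (by rwa [Fin.succ_lt_succ_iff] at hij)

def FC : (Σ _q : Pm (n+1), Chn n) → Chn (n+1) :=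
  fun x => ⟨Fch x.1 x.2, Fch_strictMono x.1 x.2,
    by rw [Fch_zero]; rfl,
    by
      rw [← Fin.succ_last, Fch_succ, eq_topB_of_val _ x.2.2.2.2, pullB_top]; rfl⟩

lemma FC_injective : Function.Injective (FC (n := n)) := by
  rintro ⟨q, c⟩ ⟨q', c'⟩ h
  have hfun : ∀ i, Fch q c i = Fch q' c' i :=
    fun i => congrFun (congrArg Subtype.val h) i
  have hq : q = q' := by
    apply atomB_inj
    have h1 := hfun (Fin.succ 0)
    rw [Fch_succ, Fch_succ, eq_botB_of_val _ c.2.2.1, eq_botB_of_val _ c'.2.2.1] at h1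
    exact h1
  subst hq
  have hc : c = c' := by
    apply Subtype.ext
    funext i
    apply pullB_inj q
    have := hfun i.succ
    rwa [Fch_succ, Fch_succ] at this
  rw [hc]

lemma FC_surjective : Function.Surjective (FC (n := n)) := by
  intro d
  obtain ⟨hmono, hd0, hdlast⟩ := d.2
  have hd0' : d.1 0 = botB (n+1) := eq_botB_of_val _ hd0
  have hdl' : d.1 (Fin.last (n+1)) = topB (n+1) := eq_topB_of_val _ hdlast
  have h01 : d.1 0 < d.1 1 := by
    apply hmono
    rw [Fin.lt_def]
    simp
  have hne : d.1 1 ≠ botB (n+1) := by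
    intro h
    rw [hd0', h] at h01
    exact lt_irrefl _ h01
  obtain ⟨q, hq⟩ := exists_atom_le (d.1 1) hne
  have hlow : 2 * n + 1 ≤ nb (d.1 1) := by
    have hemono : StrictMono (fun i : Fin (n+1) => d.1 i.succ) :=
      fun i j hij => hmono (Fin.succ_lt_succ_iff.mpr hij)
    have hb := nb_chain n _ hemono
    rw [Fin.succ_last, hdl', nb_topB, Fin.succ_zero_eq_one] at hb
    omega
  have heq : atomB q = d.1 1 := by
    rcases eq_or_lt_of_le hq with h | h
    · exact h
    · exfalso
      have := nb_lt_of_lt h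
      rw [nb_atomB] at this
      omega
  have hle1 : ∀ i : Fin (n+1), atomB q ≤ d.1 i.succ := by
    intro i
    rw [heq]
    apply hmono.monotone
    rw [Fin.le_def]
    simp [Fin.succ]
  have hkey : ∀ i : Fin (n+1), pullB q (pushB q (d.1 i.succ)) = d.1 i.succ :=
    fun i => pullB_pushB q _ (hle1 i)
  have hcmono : StrictMono (fun i : Fin (n+1) => pushB q (d.1 i.succ)) := by
    intro i j hij
    rw [← pullB_lt_iff q, hkey i, hkey j]
    exact hmono (Fin.succ_lt_succ_iff.mpr hij)
  have hc0 : (pushB q (d.1 (0 : Fin (n+1)).succ)).1 = ⊥ := by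
    have h1 : pullB q (pushB q (d.1 (0 : Fin (n+1)).succ)) = pullB q (botB n) := by
      rw [hkey 0, Fin.succ_zero_eq_one, ← heq, atomB]
    have := pullB_inj q _ _ h1
    rw [this]
    rfl
  have hclast : (pushB q (d.1 (Fin.last n).succ)).1 = ⊤ := by
    have h1 : pullB q (pushB q (d.1 (Fin.last n).succ)) = pullB q (topB n) := by
      rw [hkey (Fin.last n), Fin.succ_last, hdl', pullB_top]
    have := pullB_inj q _ _ h1
    rw [this]
    rfl
  refine ⟨⟨q, ⟨fun i => pushB q (d.1 i.succ), hcmono, hc0, hclast⟩⟩, ?_⟩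
  apply Subtype.ext
  funext i
  refine Fin.cases ?_ ?_ i
  · exact hd0'.symm
  · intro j
    show Fch _ _ j.succ = _
    rw [Fch_succ]
    exact hkey j

lemma card_step : Nat.card (Chn (n+1)) = (n+1)^2 * Nat.card (Chn n) := by
  have h := Nat.card_eq_of_bijective _ ⟨FC_injective (n := n), FC_surjective (n := n)⟩
  rw [← h, Nat.card_congr (Equiv.sigmaEquivProd (Pm (n+1)) (Chn n)), Nat.card_prod, Pm_card]

end chain

lemma bot_eq_top_zero : (⊥ : Setoid (BGround 0)) = ⊤ := by
  apply Setoid.ext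
  intro a b
  constructor
  · intro _; trivial
  · intro _
    show a = b
    apply Subtype.ext
    have := a.2
    have := b.2
    omega

lemma chain_card (n : ℕ) : Nat.card (Chn n) = Nat.factorial n ^ 2 := by
  induction n with
  | zero =>
    have h1 : Nat.factorial 0 ^ 2 = 1 := rfl
    rw [h1, Nat.card_eq_one_iff_unique]
    constructor
    · constructor
      intro c c'
      apply Subtype.ext
      funext i
      have hi : i = 0 := by
        apply Fin.ext
        have := i.2
        omega
      rw [hi]
      exact (eq_botB_of_val _ c.2.2.1).trans (eq_botB_of_val _ c'.2.2.1).symm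
    · refine ⟨⟨fun _ => botB 0, ?_, rfl, ?_⟩⟩
      · intro i j hij
        exfalso
        rw [Fin.lt_def] at hij
        have := i.2
        have := j.2
        omega
      · show (⊥ : Setoid (BGround 0)) = ⊤
        exact bot_eq_top_zero
  | succ n ih =>
    rw [card_step, ih, Nat.factorial_succ, mul_pow]


/-- The number of maximal chains of `Π^B_n` (chains of `n+1` elements from the
minimum to the maximum) equals `(n!)²`. -/
theorem typeB_partition_lattice_maximal_chains (n : ℕ) :
    Nat.card {c : Fin (n + 1) → PiB n //
        StrictMono c ∧ (c 0).1 = ⊥ ∧ (c (Fin.last n)).1 = ⊤}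
      = Nat.factorial n ^ 2 := by
  exact chain_card n
end maps
end

section
/- Exactly one element of the multiset A_n has empty descent set, and exactly (n-1)! elements of A_n have descent set equal to {1,...,n-2}. -/
/-!
Membership in `A_n` says that `σ_k ∈ [1, k]` for every `k`. A strictly increasing such sequence
is forced to be `(1, 2, …, n-1)`, and a weakly decreasing one to be `(1, 1, …, 1)`, because
`σ_1 = 1`. The multiplicity of a sequence in a product of multisets is the product of the
multiplicities of its entries: the `k`-th factor contains `k` exactly once and `1` exactly
`k` times, which gives `1` and `(n-1)!`.
-/

/-- Cartesian product of a list of multisets, as a multiset of lists. -/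
def multisetProd : List (Multiset ℕ) → Multiset (List ℕ)
  | [] => {[]}
  | m :: ms => m.bind fun a => (multisetProd ms).map (a :: ·)

/-- The `k`-th factor of `A_n`: the multiset with `k+1-i` copies of `i` for `1 ≤ i ≤ k`. -/
def factorA (k : ℕ) : Multiset ℕ :=
  (Finset.Icc 1 k).sum fun i => Multiset.replicate (k + 1 - i) i

/-- The multiset `A_n`, product of `factorA 1, …, factorA (n-1)`. -/
def An (n : ℕ) : Multiset (List ℕ) :=
  multisetProd ((List.range (n - 1)).map fun k => factorA (k + 1))

/-- The descent set of `σ = (σ_1,…,σ_m)`: indices (0-indexed `j`, corresponding to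
the 1-indexed descent `j+1 ∈ [m-1]`) with `σ_{j+1} ≥ σ_{j+2}`. -/
def desSet (σ : List ℕ) : Finset ℕ :=
  (Finset.range (σ.length - 1)).filter fun j => σ.getD (j + 1) 0 ≤ σ.getD j 0

theorem Multiset.card_filter_eq_count {α : Type*} [DecidableEq α] {s : Multiset α}
    {p : α → Prop} [DecidablePred p] {a : α} (h : ∀ x ∈ s, p x ↔ x = a) :
    (s.filter p).card = s.count a := by
  rw [Multiset.count_eq_card_filter_eq]
  exact congrArg _ (Multiset.filter_congr fun x hx => (h x hx).trans eq_comm)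

theorem mem_multisetProd {σ : List ℕ} {L : List (Multiset ℕ)} :
    σ ∈ multisetProd L ↔ List.Forall₂ (· ∈ ·) σ L := by
  induction L generalizing σ with
  | nil => simp [multisetProd]
  | cons m L ih =>
    simp only [multisetProd, Multiset.mem_bind, Multiset.mem_map, ih, List.forall₂_cons_right_iff]
    aesop

theorem count_cons_multisetProd (a : ℕ) (w : List ℕ) (m : Multiset ℕ) (L : List (Multiset ℕ)) :
    (multisetProd (m :: L)).count (a :: w) = m.count a * (multisetProd L).count w := by
  rw [multisetProd, Multiset.count_bind,
    Multiset.sum_map_eq_nsmul_single a fun b hb _ => Multiset.count_eq_zero.2 (by simp [hb]),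
    Multiset.count_map_eq_count' _ _ List.cons_injective, smul_eq_mul]

theorem count_multisetProd {w : List ℕ} {L : List (Multiset ℕ)} (h : w.length = L.length) :
    (multisetProd L).count w = (List.zipWith (fun a m => m.count a) w L).prod := by
  induction L generalizing w with
  | nil => simp_all [multisetProd]
  | cons m L ih =>
    obtain _ | ⟨a, w⟩ := w
    · simp at h
    · simp [count_cons_multisetProd, ih (Nat.succ.inj h)]

theorem mem_factorA {k a : ℕ} : a ∈ factorA k ↔ 1 ≤ a ∧ a ≤ k := by
  simp only [factorA, Multiset.mem_sum, Multiset.mem_replicate, Finset.mem_Icc]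
  constructor
  · rintro ⟨i, hi, -, rfl⟩
    exact hi
  · intro ha
    exact ⟨a, ha, by omega, rfl⟩

theorem count_factorA {k a : ℕ} (ha : 1 ≤ a) : (factorA k).count a = k + 1 - a := by
  rw [factorA, Multiset.count_sum', Finset.sum_eq_single a]
  · simp
  · intro b _ hb
    simp [Multiset.count_replicate, hb]
  · intro h
    simp only [Finset.mem_Icc, not_and, not_le] at h
    simp [h ha]

def IsSubexcedant (σ : List ℕ) : Prop :=
  ∀ i (h : i < σ.length), 1 ≤ σ[i] ∧ σ[i] ≤ i + 1

theorem mem_An {n : ℕ} {σ : List ℕ} : σ ∈ An n ↔ σ.length = n - 1 ∧ IsSubexcedant σ := by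
  simp only [An, mem_multisetProd, List.forall₂_iff_get, List.length_map, List.length_range,
    List.get_eq_getElem, List.getElem_map, List.getElem_range, mem_factorA, IsSubexcedant]
  constructor
  · rintro ⟨hlen, h⟩
    exact ⟨hlen, fun i hi => h i hi (hlen ▸ hi)⟩
  · rintro ⟨hlen, h⟩
    exact ⟨hlen, fun i hi _ => h i hi⟩

theorem count_An (n : ℕ) (f : ℕ → ℕ) :
    (An n).count ((List.range (n - 1)).map f) =
      ∏ k ∈ Finset.range (n - 1), (factorA (k + 1)).count (f k) := by
  rw [An, count_multisetProd (by simp), List.zipWith_map, List.zipWith_self,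
    Finset.prod_eq_multiset_prod, Finset.range_val, Multiset.range, Multiset.map_coe,
    Multiset.prod_coe]

theorem mem_desSet {σ : List ℕ} {j : ℕ} :
    j ∈ desSet σ ↔ ∃ h : j + 1 < σ.length, σ[j + 1] ≤ σ[j] := by
  simp only [desSet, Finset.mem_filter, Finset.mem_range]
  constructor
  · rintro ⟨hj, hle⟩
    have h : j + 1 < σ.length := by omega
    refine ⟨h, ?_⟩
    simpa [List.getElem?_eq_getElem h, List.getElem?_eq_getElem (Nat.lt_of_succ_lt h)] using hle
  · rintro ⟨h, hle⟩
    refine ⟨by omega, ?_⟩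
    simpa [List.getElem?_eq_getElem h, List.getElem?_eq_getElem (Nat.lt_of_succ_lt h)] using hle

theorem desSet_eq_empty_iff (σ : List ℕ) : desSet σ = ∅ ↔ σ.IsChain (· < ·) := by
  simp [Finset.eq_empty_iff_forall_notMem, mem_desSet, List.isChain_iff_getElem]

theorem desSet_eq_range_iff (σ : List ℕ) :
    desSet σ = Finset.range (σ.length - 1) ↔ σ.IsChain (· ≥ ·) := by
  simp only [Finset.ext_iff, mem_desSet, Finset.mem_range, List.isChain_iff_getElem]
  constructor
  · intro h i hi
    exact ((h i).2 (by omega)).2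
  · intro h i
    exact ⟨fun ⟨hi, _⟩ => by omega, fun hi => ⟨by omega, h i (by omega)⟩⟩

theorem IsSubexcedant.eq_map_succ_of_isChain_lt {σ : List ℕ} (hsub : IsSubexcedant σ)
    (hσ : σ.IsChain (· < ·)) : σ = (List.range σ.length).map (· + 1) := by
  have hge : ∀ i (h : i < σ.length), i + 1 ≤ σ[i] := by
    intro i
    induction i with
    | zero => exact fun h => (hsub 0 h).1
    | succ i ih => exact fun h => (ih (by omega)).trans_lt (List.isChain_iff_getElem.1 hσ i h)
  refine List.ext_getElem (by simp) fun i h _ => ?_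
  simpa using le_antisymm (hsub i h).2 (hge i h)

theorem IsSubexcedant.eq_map_one_of_isChain_ge {σ : List ℕ} (hsub : IsSubexcedant σ)
    (hσ : σ.IsChain (· ≥ ·)) : σ = (List.range σ.length).map fun _ => 1 := by
  have hle : ∀ i (h : i < σ.length), σ[i] ≤ 1 := by
    intro i
    induction i with
    | zero => exact fun h => (hsub 0 h).2
    | succ i ih => exact fun h => (List.isChain_iff_getElem.1 hσ i h).trans (ih (by omega))
  refine List.ext_getElem (by simp) fun i h _ => ?_
  simpa using le_antisymm (hle i h) (hsub i h).1

theorem desSet_eq_empty_iff_of_mem_An {n : ℕ} {σ : List ℕ} (hσ : σ ∈ An n) :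
    desSet σ = ∅ ↔ σ = (List.range (n - 1)).map (· + 1) := by
  obtain ⟨hlen, hsub⟩ := mem_An.1 hσ
  rw [desSet_eq_empty_iff, ← hlen]
  refine ⟨hsub.eq_map_succ_of_isChain_lt, ?_⟩
  intro h
  rw [h, List.isChain_iff_getElem]
  simp

theorem desSet_eq_range_iff_of_mem_An {n : ℕ} {σ : List ℕ} (hσ : σ ∈ An n) :
    desSet σ = Finset.range (n - 2) ↔ σ = (List.range (n - 1)).map fun _ => 1 := by
  obtain ⟨hlen, hsub⟩ := mem_An.1 hσ
  rw [show n - 2 = σ.length - 1 by omega, desSet_eq_range_iff, ← hlen]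
  refine ⟨hsub.eq_map_one_of_isChain_ge, ?_⟩
  intro h
  rw [h, List.isChain_iff_getElem]
  simp

theorem An_descent_extremes_general (n : ℕ) :
    Multiset.card ((An n).filter fun σ => desSet σ = ∅) = 1 ∧
    Multiset.card ((An n).filter fun σ => desSet σ = Finset.range (n - 2)) =
      Nat.factorial (n - 1) := by
  constructor
  · rw [Multiset.card_filter_eq_count fun σ => desSet_eq_empty_iff_of_mem_An, count_An]
    exact Finset.prod_eq_one fun k _ => by simp [count_factorA]
  · rw [Multiset.card_filter_eq_count fun σ => desSet_eq_range_iff_of_mem_An, count_An,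
      ← Finset.prod_range_add_one_eq_factorial]
    exact Finset.prod_congr rfl fun k _ => count_factorA le_rfl

/-- Exactly one element of `A_n` has empty descent set, and exactly `(n-1)!` elements
of `A_n` (counted with multiplicity) have descent set equal to `{1,…,n-2}`
(all positions). -/
theorem An_descent_extremes (n : ℕ) (hn : 2 ≤ n) :
    Multiset.card ((An n).filter fun σ => desSet σ = ∅) = 1 ∧
    Multiset.card ((An n).filter fun σ => desSet σ = Finset.range (n - 2)) =
      Nat.factorial (n - 1) :=
  An_descent_extremes_general n
end

section
/- If (f_0(x), f_1(x), ..., f_m(x)) is an interlacing sequence of real-rooted polynomials with positive leading coefficients, then every nonnegative linear combination f(x) of f_0,...,f_m is real-rooted; moreover, f(x) interlaces f_m(x) and is interlaced by f_0(x). -/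
open Polynomial in
/-- A real polynomial is real-rooted if it is zero or all of its roots (counted
with multiplicity) are real, i.e. its number of real roots equals its degree. -/
def RealRooted (f : Polynomial ℝ) : Prop :=
  f = 0 ∨ Multiset.card f.roots = f.natDegree

open Polynomial in
/-- The real roots of `f`, listed in weakly decreasing order. -/
noncomputable def rootsDesc (f : Polynomial ℝ) : List ℝ :=
  (f.roots.sort (· ≤ ·)).reverse

open Polynomial in
/-- `f` interlaces `g`: both are real-rooted, with roots `α_1 ≥ α_2 ≥ ⋯` of `f`
and `β_1 ≥ β_2 ≥ ⋯` of `g` satisfying `⋯ ≤ α_2 ≤ β_2 ≤ α_1 ≤ β_1`.  By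
convention the zero polynomial interlaces and is interlaced by everything. -/
def Interlaces (f g : Polynomial ℝ) : Prop :=
  f = 0 ∨ g = 0 ∨
    (RealRooted f ∧ RealRooted g ∧
      (rootsDesc f).length ≤ (rootsDesc g).length ∧
      (rootsDesc g).length ≤ (rootsDesc f).length + 1 ∧
      (∀ i, i < (rootsDesc f).length → (rootsDesc f).getD i 0 ≤ (rootsDesc g).getD i 0) ∧
      (∀ i, i + 1 < (rootsDesc g).length →
        (rootsDesc g).getD (i + 1) 0 ≤ (rootsDesc f).getD i 0))

open Polynomial


open Multiset Filter

noncomputable def Nge (f : ℝ[X]) (t : ℝ) : ℕ := Multiset.card (f.roots.filter (fun x => t ≤ x))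
noncomputable def Ngt (f : ℝ[X]) (t : ℝ) : ℕ := Multiset.card (f.roots.filter (fun x => t < x))
noncomputable def Nlt (f : ℝ[X]) (t : ℝ) : ℕ := Multiset.card (f.roots.filter (fun x => x < t))

def CID (g p : ℝ[X]) (δ : ℕ) : Prop := ∀ t, Nge g t ≤ Nge p t + δ ∧ Nge p t + δ ≤ Nge g t + 1


lemma cnt_lemma (s : Multiset ℝ) (t : ℝ) :
    Multiset.card (s.filter (fun x => t ≤ x)) = Multiset.card (s.filter (fun x => t < x)) + s.count t := by
  induction s using Multiset.induction_on with
  | empty => simp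
  | cons a s ih =>
    rcases lt_trichotomy t a with h | h | h
    · simp [Multiset.filter_cons, Multiset.count_cons, ih, h.le, h, (h.ne : t ≠ a)]
      omega
    · subst h
      simp [Multiset.filter_cons, Multiset.count_cons, ih, le_refl, lt_irrefl]
      omega
    · simp [Multiset.filter_cons, Multiset.count_cons, ih, not_le.2 h, not_lt.2 h.le, (h.ne' : t ≠ a)]

lemma cnt_lemma2 (s : Multiset ℝ) (t : ℝ) :
    Multiset.card (s.filter (fun x => t < x)) + Multiset.card (s.filter (fun x => x < t)) + s.count t = Multiset.card s := by
  induction s using Multiset.induction_on with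
  | empty => simp
  | cons a s ih =>
    rcases lt_trichotomy t a with h | h | h
    · simp [Multiset.filter_cons, Multiset.count_cons, h, not_lt.2 h.le, (h.ne : t ≠ a)]
      omega
    · subst h
      simp [Multiset.filter_cons, Multiset.count_cons, lt_irrefl]
      omega
    · simp [Multiset.filter_cons, Multiset.count_cons, h, not_lt.2 h.le, (h.ne' : t ≠ a)]
      omega

lemma Nge_eq_Ngt_add_count (f : ℝ[X]) (t : ℝ) : Nge f t = Ngt f t + f.roots.count t :=
  cnt_lemma _ _

lemma Ngt_add_Nlt_add_count (f : ℝ[X]) (t : ℝ) :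
    Ngt f t + Nlt f t + f.roots.count t = Multiset.card f.roots := cnt_lemma2 _ _

lemma Ngt_le_Nge (f : ℝ[X]) (t : ℝ) : Ngt f t ≤ Nge f t := by
  rw [Nge_eq_Ngt_add_count]; omega

lemma Nge_le_card (f : ℝ[X]) (t : ℝ) : Nge f t ≤ Multiset.card f.roots :=
  Multiset.card_le_card (Multiset.filter_le _ _)

lemma Nge_anti (f : ℝ[X]) {s t : ℝ} (h : s ≤ t) : Nge f t ≤ Nge f s := by
  apply Multiset.card_le_card
  apply Multiset.monotone_filter_right
  intro x hx; exact le_trans h hx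

lemma Nge_le_Ngt (f : ℝ[X]) {s t : ℝ} (h : s < t) : Nge f t ≤ Ngt f s := by
  apply Multiset.card_le_card
  apply Multiset.monotone_filter_right
  intro x hx; exact lt_of_lt_of_le h hx

lemma exists_upper (R : Multiset ℝ) (t : ℝ) :
    ∃ u, t < u ∧ ∀ x ∈ R, (t < x ↔ u ≤ x) := by
  classical
  have hF : ∀ y, y ∈ (R.filter (fun x => t < x)).toFinset ↔ (y ∈ R ∧ t < y) := by
    intro y; rw [Multiset.mem_toFinset, Multiset.mem_filter]
  set F := (R.filter (fun x => t < x)).toFinset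
  by_cases hne : F.Nonempty
  · refine ⟨min (F.min' hne) (t + 1), ?_, ?_⟩
    · apply lt_min ?_ (by linarith)
      exact ((hF _).1 (F.min'_mem hne)).2
    · intro x hx
      constructor
      · intro hx2
        apply min_le_of_left_le
        apply F.min'_le
        exact (hF _).2 ⟨hx, hx2⟩
      · intro hx2
        calc t < min (F.min' hne) (t+1) := by
              apply lt_min ?_ (by linarith)
              exact ((hF _).1 (F.min'_mem hne)).2
          _ ≤ x := hx2
  · refine ⟨t + 1, by linarith, fun x hx => ?_⟩
    constructor
    · intro hx2
      exfalso; apply hne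
      exact ⟨x, (hF _).2 ⟨hx, hx2⟩⟩
    · intro hx2; linarith

lemma exists_bot (R : Multiset ℝ) : ∃ t, ∀ x ∈ R, t ≤ x := by
  induction R using Multiset.induction_on with
  | empty => exact ⟨0, by simp⟩
  | cons a s ih =>
    obtain ⟨t, ht⟩ := ih
    exact ⟨min t a, fun x hx => by
      rcases Multiset.mem_cons.1 hx with h | h
      · subst h; exact min_le_right _ _
      · exact le_trans (min_le_left _ _) (ht x h)⟩

lemma Ngt_eq_Nge_upper {f : ℝ[X]} {t u : ℝ} (h : ∀ x ∈ f.roots, (t < x ↔ u ≤ x)) :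
    Ngt f t = Nge f u := by
  unfold Ngt Nge
  congr 1
  apply Multiset.filter_congr
  intro x hx; simp [h x hx]

lemma Nge_eq_card_bot {f : ℝ[X]} {t : ℝ} (h : ∀ x ∈ f.roots, t ≤ x) :
    Nge f t = Multiset.card f.roots := by
  unfold Nge
  congr 1
  rw [Multiset.filter_eq_self]
  exact h

-- if f is negative somewhere and positive somewhere, it has a root
lemma exists_root_of_sign_change {q : ℝ[X]} {a b : ℝ} (ha : eval a q < 0) (hb : 0 < eval b q) :
    ∃ x, q.eval x = 0 := by
  have := intermediate_value_univ a b q.continuous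
  have h0 : (0:ℝ) ∈ Set.Icc (eval a q) (eval b q) := ⟨ha.le, hb.le⟩
  obtain ⟨x, hx⟩ := this h0
  exact ⟨x, hx⟩

-- odd degree real polynomial has a root
lemma odd_natDegree_exists_root (p : ℝ[X]) (hodd : Odd p.natDegree) :
    ∃ x, p.eval x = 0 := by
  have hp0 : p ≠ 0 := fun h => by simp [h] at hodd
  suffices H : ∀ q : ℝ[X], Odd q.natDegree → 0 < q.leadingCoeff → ∃ x, q.eval x = 0 by
    rcases lt_trichotomy 0 p.leadingCoeff with h | h | h
    · exact H p hodd h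
    · exact absurd h.symm (leadingCoeff_ne_zero.2 hp0)
    · obtain ⟨x, hx⟩ := H (-p) (by simpa using hodd) (by simp; linarith)
      exact ⟨x, by simpa using hx⟩
  intro q hodd hlc
  have hnd : 0 < q.natDegree := by
    rcases Nat.eq_zero_or_pos q.natDegree with h | h
    · rw [h] at hodd; exact absurd hodd (by decide)
    · exact h
  have hdeg' : 0 < q.degree := natDegree_pos_iff_degree_pos.1 hnd
  have htop : Tendsto (fun x => eval x q) atTop atTop :=
    q.tendsto_atTop_of_leadingCoeff_nonneg hdeg' hlc.le
  obtain ⟨b, hb⟩ := (htop.eventually_gt_atTop 0).exists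
  set r : ℝ[X] := -(q.comp (-X)) with hr
  have hrdeg : r.natDegree = q.natDegree := by
    rw [hr, natDegree_neg, natDegree_comp]; simp
  have hrlc : 0 < r.leadingCoeff := by
    rw [hr, leadingCoeff_neg, leadingCoeff_comp (by simp)]
    simp only [leadingCoeff_neg, leadingCoeff_X]
    rw [hodd.neg_one_pow]
    simp; linarith
  have hrtop : Tendsto (fun x => eval x r) atTop atTop :=
    r.tendsto_atTop_of_leadingCoeff_nonneg
      (natDegree_pos_iff_degree_pos.1 (hrdeg ▸ hnd)) hrlc.le
  obtain ⟨a, ha⟩ := (hrtop.eventually_gt_atTop 0).exists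
  have ha' : eval (-a) q < 0 := by
    have : eval a r = -(eval (-a) q) := by
      rw [hr]; simp [eval_comp]
    rw [this] at ha; linarith
  exact exists_root_of_sign_change ha' hb

-- a polynomial with no real roots and positive leading coefficient is everywhere positive
lemma pos_of_no_roots {w : ℝ[X]} (hw : w.roots = 0) (hlc : 0 < w.leadingCoeff) :
    ∀ x, 0 < w.eval x := by
  have hw0 : w ≠ 0 := leadingCoeff_ne_zero.1 (ne_of_gt hlc)
  have hnr : ∀ x, w.eval x ≠ 0 := by
    intro x hx
    have : x ∈ w.roots := by rw [mem_roots hw0]; exact hx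
    rw [hw] at this; simp at this
  -- positive somewhere
  have hb : ∃ b, 0 < w.eval b := by
    rcases Nat.eq_zero_or_pos w.natDegree with h | h
    · refine ⟨0, ?_⟩
      have := Polynomial.eq_C_of_natDegree_eq_zero h
      rw [this]
      rw [this] at hlc
      simpa using hlc
    · have htop : Tendsto (fun x => eval x w) atTop atTop :=
        w.tendsto_atTop_of_leadingCoeff_nonneg (natDegree_pos_iff_degree_pos.1 h) hlc.le
      exact (htop.eventually_gt_atTop 0).exists
  obtain ⟨b, hb⟩ := hb
  intro x
  rcases lt_trichotomy 0 (w.eval x) with h | h | h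
  · exact h
  · exact absurd h.symm (hnr x)
  · obtain ⟨y, hy⟩ := exists_root_of_sign_change h hb
    exact absurd hy (hnr y)

-- parity of number of real roots
lemma card_roots_parity (f : ℝ[X]) (hf : f ≠ 0) :
    (Multiset.card f.roots) % 2 = f.natDegree % 2 := by
  obtain ⟨w, hw, hcard, hwroots⟩ := f.exists_prod_multiset_X_sub_C_mul
  have hweven : w.natDegree % 2 = 0 := by
    rcases Nat.even_or_odd w.natDegree with h | h
    · exact Nat.even_iff.1 h
    · exfalso
      obtain ⟨x, hx⟩ := odd_natDegree_exists_root w h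
      have hw0 : w ≠ 0 := by
        intro h0; rw [h0, mul_zero] at hw; exact hf hw.symm
      have : x ∈ w.roots := by rw [mem_roots hw0]; exact hx
      rw [hwroots] at this; simp at this
  omega

lemma prod_sign (t : ℝ) (s : Multiset ℝ) (hts : t ∉ s) :
    0 < (-1:ℝ)^(Multiset.card (s.filter (fun x => t < x))) * (s.map (fun a => t - a)).prod := by
  induction s using Multiset.induction_on with
  | empty => simp
  | cons a s ih =>
    have hta : t ≠ a := fun h => hts (h ▸ Multiset.mem_cons_self a s)
    have hts' : t ∉ s := fun h => hts (Multiset.mem_cons_of_mem h)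
    have IH := ih hts'
    set P := (s.map (fun a => t - a)).prod with hP
    set c := Multiset.card (s.filter (fun x => t < x)) with hc
    rw [Multiset.map_cons, Multiset.prod_cons]
    rcases lt_or_gt_of_ne hta with h | h
    · -- t < a
      rw [Multiset.filter_cons_of_pos _ h, Multiset.card_cons]
      have key : (-1:ℝ)^(c+1) * ((t-a) * P) = (a-t) * ((-1)^c * P) := by
        rw [pow_succ]; ring
      rw [key]
      exact mul_pos (by linarith) IH
    · -- a < t
      rw [Multiset.filter_cons_of_neg _ (by simp; linarith)]
      have key : (-1:ℝ)^c * ((t-a) * P) = (t-a) * ((-1)^c * P) := by ring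
      rw [key]
      exact mul_pos (by linarith) IH


lemma eval_sign {f : ℝ[X]} (hf : f ≠ 0)
    (hlc : 0 < f.leadingCoeff) {t : ℝ} (h0 : f.eval t ≠ 0) :
    0 < (-1:ℝ)^(Ngt f t) * f.eval t := by
  have hts : t ∉ f.roots := by
    intro h
    exact h0 ((mem_roots hf).1 h)
  obtain ⟨w, hw, hcard, hwroots⟩ := f.exists_prod_multiset_X_sub_C_mul
  have hmon : ((f.roots.map fun a => X - C a).prod).Monic := monic_multiset_prod_of_monic _ _ (fun a _ => monic_X_sub_C a)
  have hwlc : w.leadingCoeff = f.leadingCoeff := by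
    conv_rhs => rw [← hw]
    rw [leadingCoeff_mul, hmon.leadingCoeff, one_mul]
  have hwpos := pos_of_no_roots hwroots (by rw [hwlc]; exact hlc)
  have heval : f.eval t = (f.roots.map (fun a => t - a)).prod * w.eval t := by
    conv_lhs => rw [← hw]
    rw [eval_mul, eval_multiset_prod, Multiset.map_map]
    congr 2
    apply Multiset.map_congr rfl
    intro x _
    simp
  rw [heval]
  have := prod_sign t f.roots hts
  have key : (-1:ℝ)^(Ngt f t) * ((f.roots.map (fun a => t - a)).prod * w.eval t)
      = ((-1:ℝ)^(Ngt f t) * (f.roots.map (fun a => t - a)).prod) * w.eval t := by ring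
  rw [key]
  exact mul_pos this (hwpos t)

lemma pow_sign_parity {x : ℝ} {a b : ℕ} (h1 : 0 < (-1:ℝ)^a * x) (h2 : 0 < (-1:ℝ)^b * x) :
    (a + b) % 2 = 0 := by
  rcases Nat.even_or_odd a with ha | ha <;> rcases Nat.even_or_odd b with hb | hb
  · have := Nat.even_iff.1 ha; have := Nat.even_iff.1 hb; omega
  · rw [ha.neg_one_pow] at h1; rw [hb.neg_one_pow] at h2; nlinarith
  · rw [ha.neg_one_pow] at h1; rw [hb.neg_one_pow] at h2; nlinarith
  · have := Nat.odd_iff.1 ha; have := Nat.odd_iff.1 hb; omega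

lemma pow_sign_congr {x : ℝ} {a b : ℕ} (h : (a + b) % 2 = 0) (h1 : 0 < (-1:ℝ)^a * x) :
    0 < (-1:ℝ)^b * x := by
  rcases Nat.even_or_odd a with ha | ha
  · have hb : Even b := by have := Nat.even_iff.1 ha; exact Nat.even_iff.2 (by omega)
    rw [ha.neg_one_pow] at h1; rw [hb.neg_one_pow]; linarith
  · have hb : Odd b := by have := Nat.odd_iff.1 ha; exact Nat.odd_iff.2 (by omega)
    rw [ha.neg_one_pow] at h1; rw [hb.neg_one_pow]; linarith


lemma rootsDesc_coe (f : ℝ[X]) : ((rootsDesc f : List ℝ) : Multiset ℝ) = f.roots := by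
  rw [rootsDesc, Multiset.coe_reverse, Multiset.sort_eq]

lemma rootsDesc_length (f : ℝ[X]) : (rootsDesc f).length = Multiset.card f.roots := by
  rw [rootsDesc, List.length_reverse, Multiset.length_sort]

lemma rootsDesc_sorted (f : ℝ[X]) : (rootsDesc f).Pairwise (· ≥ ·) := by
  exact List.pairwise_reverse.mpr ((Multiset.pairwise_sort f.roots (· ≤ ·)).imp (fun h => h))

-- master bridge lemma for sorted-descending lists
lemma sorted_getD_iff {L : List ℝ} (hL : L.Pairwise (· ≥ ·)) {t : ℝ} {i : ℕ} (hi : i < L.length) :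
    (t ≤ L.getD i 0 ↔ i < Multiset.card (Multiset.filter (fun x => t ≤ x) (↑L : Multiset ℝ))) := by
  induction L generalizing i with
  | nil => simp at hi
  | cons a l ih =>
    rw [List.pairwise_cons] at hL
    obtain ⟨ha, hl⟩ := hL
    have hcoe : ((a :: l : List ℝ) : Multiset ℝ) = a ::ₘ (↑l : Multiset ℝ) := rfl
    rw [hcoe]
    by_cases hta : t ≤ a
    · rw [Multiset.filter_cons_of_pos _ hta, Multiset.card_cons]
      cases i with
      | zero => simpa using hta
      | succ j =>
        have hj : j < l.length := by simpa using hi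
        have := ih hl hj
        simp only [List.getD_cons_succ]
        have he : Multiset.card (Multiset.filter (LE.le t) (↑l : Multiset ℝ))
            = Multiset.card (Multiset.filter (fun x => t ≤ x) (↑l : Multiset ℝ)) := rfl
        rcases this with ⟨h1, h2⟩
        constructor
        · intro hle
          have := h1 hle
          omega
        · intro hlt
          apply h2
          omega
    · rw [Multiset.filter_cons_of_neg _ hta]
      have hz : Multiset.card (Multiset.filter (fun x => t ≤ x) (↑l : Multiset ℝ)) = 0 := by
        rw [Multiset.card_eq_zero, Multiset.filter_eq_nil]
        intro x hx
        have : x ≤ a := ha x (by exact_mod_cast hx)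
        simp only [not_le] at hta ⊢
        linarith
      rw [hz]
      simp only [Nat.not_lt_zero, iff_false, not_le]
      cases i with
      | zero => simp only [List.getD_cons_zero]; linarith [not_le.1 hta]
      | succ j =>
        have hj : j < l.length := by simpa using hi
        simp only [List.getD_cons_succ]
        have hmem : l.getD j 0 ∈ l := by
          rw [List.getD_eq_getElem?_getD]
          have := List.getElem?_eq_getElem hj
          rw [this]
          simp [List.getElem_mem]
        have : l.getD j 0 ≤ a := ha _ hmem
        linarith [not_le.1 hta]

lemma getD_le_iff_Nge {f : ℝ[X]} {t : ℝ} {i : ℕ} (hi : i < (rootsDesc f).length) :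
    t ≤ (rootsDesc f).getD i 0 ↔ i < Nge f t := by
  have := sorted_getD_iff (rootsDesc_sorted f) (t := t) hi
  rwa [rootsDesc_coe] at this



-- strict descent for nodup
lemma rootsDesc_strict {f : ℝ[X]} (hnd : f.roots.Nodup) {i j : ℕ}
    (hij : i < j) (hj : j < (rootsDesc f).length) :
    (rootsDesc f).getD j 0 < (rootsDesc f).getD i 0 := by
  have hnd' : (rootsDesc f).Nodup := by
    have := rootsDesc_coe f
    rw [← this] at hnd
    exact hnd
  have hsorted := rootsDesc_sorted f
  have hpair : (rootsDesc f).Pairwise (· > ·) := by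
    have h2 := List.Pairwise.and hsorted hnd'
    exact h2.imp (fun h => lt_of_le_of_ne h.1 (Ne.symm h.2))
  have := List.pairwise_iff_getElem.1 hpair i j (lt_trans hij hj) hj hij
  rw [List.getD_eq_getElem _ 0 hj, List.getD_eq_getElem _ 0 (lt_trans hij hj)]
  exact this

-- membership of getD
lemma rootsDesc_getD_mem {f : ℝ[X]} {i : ℕ} (hi : i < (rootsDesc f).length) :
    (rootsDesc f).getD i 0 ∈ f.roots := by
  have h1 : (rootsDesc f).getD i 0 ∈ rootsDesc f := by
    rw [List.getD_eq_getElem _ 0 hi]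
    exact List.getElem_mem _
  rw [← rootsDesc_coe f]
  exact_mod_cast h1




lemma add_pos_lead {p q : ℝ[X]} (hp : 0 < p.leadingCoeff) (hq : 0 < q.leadingCoeff) :
    0 < (p + q).leadingCoeff ∧ (p + q).natDegree = max p.natDegree q.natDegree := by
  have hp0 : p ≠ 0 := leadingCoeff_ne_zero.1 (ne_of_gt hp)
  have hq0 : q ≠ 0 := leadingCoeff_ne_zero.1 (ne_of_gt hq)
  rcases lt_trichotomy p.degree q.degree with h | h | h
  · have hlc := leadingCoeff_add_of_degree_lt h
    have hdeg := degree_add_eq_right_of_degree_lt h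
    have hnat : (p + q).natDegree = q.natDegree := natDegree_eq_of_degree_eq hdeg
    have hle : p.natDegree ≤ q.natDegree := natDegree_le_natDegree h.le
    rw [hlc, hnat]
    exact ⟨hq, by omega⟩
  · have hne : p.leadingCoeff + q.leadingCoeff ≠ 0 := by positivity
    have hlc := leadingCoeff_add_of_degree_eq h hne
    have hdeg := degree_add_eq_of_leadingCoeff_add_ne_zero hne
    have hnat : (p + q).natDegree = max p.natDegree q.natDegree := by
      have h2 : (p+q).degree = q.degree := by rw [hdeg, h]; simp
      have := natDegree_eq_of_degree_eq h2
      have h3 : p.natDegree = q.natDegree := natDegree_eq_of_degree_eq h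
      omega
    rw [hlc, hnat]
    constructor
    · positivity
    · rfl
  · have hlc := leadingCoeff_add_of_degree_lt' h
    have hdeg := degree_add_eq_left_of_degree_lt h
    have hnat : (p + q).natDegree = p.natDegree := natDegree_eq_of_degree_eq hdeg
    have hle : q.natDegree ≤ p.natDegree := natDegree_le_natDegree h.le
    rw [hlc, hnat]
    exact ⟨hp, by omega⟩

theorem core_sq (δ : ℕ) (hδ : δ ≤ 1) (g q1 q2 : ℝ[X])
    (hg0 : g ≠ 0) (hgrr : Multiset.card g.roots = g.natDegree) (hglc : 0 < g.leadingCoeff)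
    (hgnd : g.roots.Nodup)
    (hq10 : q1 ≠ 0) (hq1rr : Multiset.card q1.roots = q1.natDegree) (hq1lc : 0 < q1.leadingCoeff)
    (hq20 : q2 ≠ 0) (hq2rr : Multiset.card q2.roots = q2.natDegree) (hq2lc : 0 < q2.leadingCoeff)
    (h1 : CID g q1 δ) (h2 : CID g q2 δ) :
    (q1 + q2) ≠ 0 ∧ 0 < (q1 + q2).leadingCoeff ∧
      Multiset.card (q1 + q2).roots = (q1 + q2).natDegree ∧ CID g (q1 + q2) δ := by
  set h : ℝ[X] := q1 + q2 with hh
  obtain ⟨hhlc, hhdeg⟩ := add_pos_lead hq1lc hq2lc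
  have hh0 : h ≠ 0 := leadingCoeff_ne_zero.1 (ne_of_gt hhlc)
  set n : ℕ := h.natDegree with hn
  set r : ℕ := Multiset.card g.roots with hr
  have hrlen : (rootsDesc g).length = r := rootsDesc_length g
  set γ : ℕ → ℝ := fun k => (rootsDesc g).getD (k-1) 0 with hγ
  -- degree bound for q's
  have hqbound : ∀ q : ℝ[X], q ≠ 0 → Multiset.card q.roots = q.natDegree → CID g q δ →
      q.natDegree + δ ≤ r + 1 := by
    intro q hq0' hqrr' hcid
    obtain ⟨t, ht⟩ := exists_bot q.roots
    have h1' := (hcid t).2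
    have h2' := Nge_eq_card_bot ht
    have h3' := Nge_le_card g t
    omega
  have hnb : n + δ ≤ r + 1 := by
    have b1 := hqbound q1 hq10 hq1rr h1
    have b2 := hqbound q2 hq20 hq2rr h2
    have hm : n = max q1.natDegree q2.natDegree := hhdeg
    rcases Nat.le_total q1.natDegree q2.natDegree with hle | hle
    · rw [Nat.max_eq_right hle] at hm; omega
    · rw [Nat.max_eq_left hle] at hm; omega
  have hcard_le : Multiset.card h.roots ≤ n := card_roots'  h
  have hcard_par : Multiset.card h.roots % 2 = n % 2 := card_roots_parity h hh0
  -- facts about γ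
  have F1 : ∀ k, 1 ≤ k → k ≤ r → Nge g (γ k) = k := by
    intro k hk1 hkr
    have hi : k - 1 < (rootsDesc g).length := by omega
    have hge : k - 1 < Nge g (γ k) := (getD_le_iff_Nge hi).1 (le_refl _)
    rcases Nat.lt_or_ge k r with hkr' | hkr'
    · -- k < r : show ¬ (k < Nge g (γ k))
      by_contra hcon
      have hlt : k < Nge g (γ k) := by
        have := Nge_le_card g (γ k)
        omega
      have hik : k < (rootsDesc g).length := by omega
      have := (getD_le_iff_Nge hik).2 hlt
      have hstrict := rootsDesc_strict hgnd (show k - 1 < k by omega) hik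
      rw [hγ] at this
      simp only at this
      have : (rootsDesc g).getD (k-1) 0 ≤ (rootsDesc g).getD k 0 := this
      linarith
    · have := Nge_le_card g (γ k)
      omega
  have Fcount : ∀ k, 1 ≤ k → k ≤ r → g.roots.count (γ k) = 1 := by
    intro k hk1 hkr
    have hi : k - 1 < (rootsDesc g).length := by omega
    have hmem : γ k ∈ g.roots := rootsDesc_getD_mem hi
    exact Multiset.count_eq_one_of_mem hgnd hmem
  have F2 : ∀ k, 1 ≤ k → k ≤ r → Ngt g (γ k) + 1 = k := by
    intro k hk1 hkr
    have := Nge_eq_Ngt_add_count g (γ k)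
    have := F1 k hk1 hkr
    have := Fcount k hk1 hkr
    omega
  have F3 : ∀ t, 1 ≤ Nge g t → t ≤ γ (Nge g t) := by
    intro t ht
    have hle := Nge_le_card g t
    have hi : Nge g t - 1 < (rootsDesc g).length := by omega
    exact (getD_le_iff_Nge hi).2 (by omega)
  have F4 : ∀ t, Nge g t < r → γ (Nge g t + 1) < t := by
    intro t ht
    have hi : Nge g t < (rootsDesc g).length := by omega
    by_contra hcon
    push_neg at hcon
    have hcon' : t ≤ (rootsDesc g).getD (Nge g t + 1 - 1) 0 := hcon
    rw [Nat.add_sub_cancel] at hcon'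
    have := (getD_le_iff_Nge hi).1 hcon'
    omega
  have F5 : ∀ k, 1 ≤ k → k < r → γ (k+1) < γ k := by
    intro k hk1 hkr
    have hik : k < (rootsDesc g).length := by omega
    have := rootsDesc_strict hgnd (show k - 1 < k by omega) hik
    simpa [hγ] using this
  -- sign of q at γ k
  have Qsign : ∀ (q : ℝ[X]), q ≠ 0 → Multiset.card q.roots = q.natDegree →
      0 < q.leadingCoeff → CID g q δ →
      ∀ k, 1 ≤ k → k ≤ r → 0 ≤ (-1:ℝ)^(k+δ) * q.eval (γ k) := by
    intro q hq0' hqrr' hqlc' hcid k hk1 hkr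
    by_cases hz : q.eval (γ k) = 0
    · rw [hz]; simp
    · -- Ngt q (γ k) + δ = k
      obtain ⟨u, hu1, hu2⟩ := exists_upper (g.roots + q.roots) (γ k)
      have hgq : Ngt g (γ k) = Nge g u :=
        Ngt_eq_Nge_upper (fun x hx => hu2 x (Multiset.mem_add.2 (Or.inl hx)))
      have hqq : Ngt q (γ k) = Nge q u :=
        Ngt_eq_Nge_upper (fun x hx => hu2 x (Multiset.mem_add.2 (Or.inr hx)))
      have hup : Ngt q (γ k) + δ ≤ k := by
        have := (hcid u).2
        have := F2 k hk1 hkr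
        omega
      have hcnt0 : q.roots.count (γ k) = 0 := by
        rw [Multiset.count_eq_zero]
        intro hmem
        exact hz ((mem_roots hq0').1 hmem)
      have hlow : k ≤ Ngt q (γ k) + δ := by
        have := (hcid (γ k)).1
        have := F1 k hk1 hkr
        have := Nge_eq_Ngt_add_count q (γ k)
        omega
      have heq : Ngt q (γ k) + δ = k := le_antisymm hup hlow
      have hsgn := eval_sign hq0' hqlc' hz
      have := pow_sign_congr (a := Ngt q (γ k)) (b := k + δ) (by omega) hsgn
      linarith
  have Hsign : ∀ k, 1 ≤ k → k ≤ r → 0 ≤ (-1:ℝ)^(k+δ) * h.eval (γ k) := by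
    intro k hk1 hkr
    have s1 := Qsign q1 hq10 hq1rr hq1lc h1 k hk1 hkr
    have s2 := Qsign q2 hq20 hq2rr hq2lc h2 k hk1 hkr
    have : h.eval (γ k) = q1.eval (γ k) + q2.eval (γ k) := by rw [hh, eval_add]
    rw [this]
    nlinarith
  have Hparity : ∀ k, 1 ≤ k → k ≤ r → h.eval (γ k) ≠ 0 →
      (Ngt h (γ k) + (k + δ)) % 2 = 0 := by
    intro k hk1 hkr hz
    have hs := Hsign k hk1 hkr
    have hs' : 0 < (-1:ℝ)^(k+δ) * h.eval (γ k) := by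
      rcases hs.lt_or_eq with h' | h'
      · exact h'
      · exfalso
        have hp : ((-1:ℝ)^(k+δ)) ≠ 0 := by positivity
        have := mul_eq_zero.1 h'.symm
        tauto
    exact pow_sign_parity (eval_sign hh0 hhlc hz) hs'
  have Hcount : ∀ k, h.eval (γ k) = 0 → 1 ≤ h.roots.count (γ k) := by
    intro k hz
    rw [Multiset.one_le_count_iff_mem]
    rw [mem_roots hh0]
    exact hz
  -- main upward induction
  have ind : ∀ k, 1 ≤ k → k ≤ r → k ≤ Nge h (γ k) + δ := by
    intro k
    induction k with
    | zero => omega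
    | succ k ih =>
      intro _ hk
      have hprev : k ≤ Ngt h (γ (k+1)) + δ := by
        rcases Nat.eq_zero_or_pos k with h0 | h0
        · omega
        · have hb1 := ih h0 (by omega)
          have hb2 : γ (k+1) < γ k := F5 k h0 (by omega)
          have hb3 := Nge_le_Ngt h hb2
          omega
      by_cases h0 : h.eval (γ (k+1)) = 0
      · have hc := Hcount (k+1) h0
        have := Nge_eq_Ngt_add_count h (γ (k+1))
        omega
      · have hpar := Hparity (k+1) (by omega) hk h0
        have hcnt : h.roots.count (γ (k+1)) = 0 := by
          rw [Multiset.count_eq_zero]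
          intro hmem
          exact h0 ((mem_roots hh0).1 hmem)
        have := Nge_eq_Ngt_add_count h (γ (k+1))
        omega
  -- mirror parity
  have Hparity' : ∀ k, 1 ≤ k → k ≤ r → h.eval (γ k) ≠ 0 →
      (Nlt h (γ k) + n + k + δ) % 2 = 0 := by
    intro k hk1 hkr hz
    have hpar := Hparity k hk1 hkr hz
    have hcnt : h.roots.count (γ k) = 0 := by
      rw [Multiset.count_eq_zero]
      intro hmem
      exact hz ((mem_roots hh0).1 hmem)
    have hpart := Ngt_add_Nlt_add_count h (γ k)
    omega
  -- downward induction
  have ind' : ∀ d k, k + d = r → 1 ≤ k →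
      n + δ ≤ Nlt h (γ k) + h.roots.count (γ k) + k := by
    intro d
    induction d with
    | zero =>
      intro k hk h1k
      -- k = r
      by_cases h0 : h.eval (γ k) = 0
      · have hc := Hcount k h0
        omega
      · have hpar := Hparity' k h1k (by omega) h0
        omega
    | succ d ih =>
      intro k hk h1k
      have hih := ih (k+1) (by omega) (by omega)
      -- Nlt h (γ (k+1)) + count (γ (k+1)) ≤ Nlt h (γ k)
      have hstep : Nlt h (γ (k+1)) + h.roots.count (γ (k+1)) ≤ Nlt h (γ k) := by
        have hlt : γ (k+1) < γ k := F5 k h1k (by omega)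
        have e1 := Ngt_add_Nlt_add_count h (γ (k+1))
        have e2 := Ngt_add_Nlt_add_count h (γ k)
        have e3 := Nge_eq_Ngt_add_count h (γ k)
        have e4 := Nge_le_Ngt h hlt
        omega
      by_cases h0 : h.eval (γ k) = 0
      · have hc := Hcount k h0
        omega
      · have hpar := Hparity' k h1k (by omega) h0
        have hcnt : h.roots.count (γ k) = 0 := by
          rw [Multiset.count_eq_zero]
          intro hmem
          exact h0 ((mem_roots hh0).1 hmem)
        omega
  -- real-rootedness of h
  have hcard : Multiset.card h.roots = n := by
    have hlow : r ≤ Multiset.card h.roots + δ := by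
      rcases Nat.eq_zero_or_pos r with h0 | h0
      · omega
      · have := ind r h0 (le_refl r)
        have := Nge_le_card h (γ r)
        omega
    omega
  refine ⟨hh0, hhlc, hcard, ?_⟩
  intro t
  set k : ℕ := Nge g t with hkdef
  have hkr : k ≤ r := Nge_le_card g t
  constructor
  · -- k ≤ Nge h t + δ
    rcases Nat.eq_zero_or_pos k with h0 | h0
    · omega
    · have ht1 : t ≤ γ k := F3 t h0
      have := ind k h0 hkr
      have := Nge_anti h ht1
      omega
  · -- Nge h t + δ ≤ k + 1
    rcases Nat.lt_or_ge k r with hlt | hge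
    · have hgt : γ (k+1) < t := F4 t hlt
      have hb := Nge_le_Ngt h hgt
      have hd := ind' (r - (k+1)) (k+1) (by omega) (by omega)
      have e1 := Ngt_add_Nlt_add_count h (γ (k+1))
      omega
    · have := Nge_le_card h t
      omega





lemma cid_count {g q : ℝ[X]} {δ : ℕ} (hcid : CID g q δ) (hδ : δ ≤ 1) (x : ℝ) :
    g.roots.count x ≤ q.roots.count x + 1 := by
  obtain ⟨u, hu1, hu2⟩ := exists_upper (g.roots + q.roots) x
  have hgq : Ngt g x = Nge g u :=
    Ngt_eq_Nge_upper (fun y hy => hu2 y (Multiset.mem_add.2 (Or.inl hy)))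
  have hqq : Ngt q x = Nge q u :=
    Ngt_eq_Nge_upper (fun y hy => hu2 y (Multiset.mem_add.2 (Or.inr hy)))
  have c1 := (hcid x).1
  have c2 := (hcid u).2
  have e1 := Nge_eq_Ngt_add_count g x
  have e2 := Nge_eq_Ngt_add_count q x
  omega

lemma Nge_split {p p' : ℝ[X]} {s : Multiset ℝ} (hsplit : p.roots = s + p'.roots) (t : ℝ) :
    Nge p t = Multiset.card (s.filter (fun x => t ≤ x)) + Nge p' t := by
  unfold Nge
  rw [hsplit, Multiset.filter_add, Multiset.card_add]

theorem core (δ : ℕ) (hδ : δ ≤ 1) (g q1 q2 : ℝ[X])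
    (hg0 : g ≠ 0) (hgrr : Multiset.card g.roots = g.natDegree) (hglc : 0 < g.leadingCoeff)
    (hq10 : q1 ≠ 0) (hq1rr : Multiset.card q1.roots = q1.natDegree) (hq1lc : 0 < q1.leadingCoeff)
    (hq20 : q2 ≠ 0) (hq2rr : Multiset.card q2.roots = q2.natDegree) (hq2lc : 0 < q2.leadingCoeff)
    (h1 : CID g q1 δ) (h2 : CID g q2 δ) :
    (q1 + q2) ≠ 0 ∧ 0 < (q1 + q2).leadingCoeff ∧
      Multiset.card (q1 + q2).roots = (q1 + q2).natDegree ∧ CID g (q1 + q2) δ := by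
  classical
  set s : Multiset ℝ := g.roots - g.roots.dedup with hs
  have hsle : s ≤ g.roots := tsub_le_self
  set e : ℝ[X] := (s.map (fun a => X - C a)).prod with he
  have hemon : e.Monic := monic_multiset_prod_of_monic _ _ (fun a _ => monic_X_sub_C a)
  have he0 : e ≠ 0 := hemon.ne_zero
  have heroots : e.roots = s := roots_multiset_prod_X_sub_C s
  have hedeg : e.natDegree = Multiset.card s := natDegree_multiset_prod_X_sub_C_eq_card s
  -- divisibility
  have hdvd_g : e ∣ g := (Multiset.prod_X_sub_C_dvd_iff_le_roots hg0 s).2 hsle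
  have hcount_s : ∀ x, s.count x = g.roots.count x - (g.roots.dedup).count x := by
    intro x; rw [hs, Multiset.count_sub]
  have hsleq : ∀ q : ℝ[X], CID g q δ → s ≤ q.roots := by
    intro q hcid
    rw [Multiset.le_iff_count]
    intro x
    have hc := cid_count hcid hδ x
    have hd : (g.roots.dedup).count x = if x ∈ g.roots then 1 else 0 := by
      rw [Multiset.count_dedup]
    rw [hcount_s x, hd]
    by_cases hx : x ∈ g.roots
    · simp only [hx, if_true]
      have := Multiset.count_le_card x q.roots
      omega
    · simp only [hx, if_false]
      have : g.roots.count x = 0 := Multiset.count_eq_zero.2 hx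
      omega
  have hdvd_q1 : e ∣ q1 := (Multiset.prod_X_sub_C_dvd_iff_le_roots hq10 s).2 (hsleq q1 h1)
  have hdvd_q2 : e ∣ q2 := (Multiset.prod_X_sub_C_dvd_iff_le_roots hq20 s).2 (hsleq q2 h2)
  obtain ⟨g', hg'⟩ := hdvd_g
  obtain ⟨p1, hp1⟩ := hdvd_q1
  obtain ⟨p2, hp2⟩ := hdvd_q2
  have hg'0 : g' ≠ 0 := by rintro rfl; rw [mul_zero] at hg'; exact hg0 hg'
  have hp10 : p1 ≠ 0 := by rintro rfl; rw [mul_zero] at hp1; exact hq10 hp1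
  have hp20 : p2 ≠ 0 := by rintro rfl; rw [mul_zero] at hp2; exact hq20 hp2
  have hgsplit : g.roots = s + g'.roots := by
    conv_lhs => rw [hg']
    rw [roots_mul (hg' ▸ hg0), heroots]
  have hp1split : q1.roots = s + p1.roots := by
    conv_lhs => rw [hp1]
    rw [roots_mul (hp1 ▸ hq10), heroots]
  have hp2split : q2.roots = s + p2.roots := by
    conv_lhs => rw [hp2]
    rw [roots_mul (hp2 ▸ hq20), heroots]
  -- g' roots are dedup
  have hg'roots : g'.roots = g.roots.dedup := by
    have h1' : g'.roots = g.roots - s := by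
      rw [hgsplit]; simp
    rw [h1', hs, tsub_tsub_cancel_of_le (Multiset.dedup_le _)]
  have hg'nd : g'.roots.Nodup := by rw [hg'roots]; exact Multiset.nodup_dedup _
  -- leading coefficients
  have hlc_g : g'.leadingCoeff = g.leadingCoeff := by
    rw [hg', leadingCoeff_mul, hemon.leadingCoeff, one_mul]
  have hlc_p1 : p1.leadingCoeff = q1.leadingCoeff := by
    rw [hp1, leadingCoeff_mul, hemon.leadingCoeff, one_mul]
  have hlc_p2 : p2.leadingCoeff = q2.leadingCoeff := by
    rw [hp2, leadingCoeff_mul, hemon.leadingCoeff, one_mul]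
  -- degrees
  have hdeg_g : g.natDegree = e.natDegree + g'.natDegree := by
    rw [hg', natDegree_mul he0 hg'0]
  have hdeg_p1 : q1.natDegree = e.natDegree + p1.natDegree := by
    rw [hp1, natDegree_mul he0 hp10]
  have hdeg_p2 : q2.natDegree = e.natDegree + p2.natDegree := by
    rw [hp2, natDegree_mul he0 hp20]
  -- cards
  have hcard_g : Multiset.card g.roots = Multiset.card s + Multiset.card g'.roots := by
    rw [hgsplit, Multiset.card_add]
  have hcard_p1 : Multiset.card q1.roots = Multiset.card s + Multiset.card p1.roots := by
    rw [hp1split, Multiset.card_add]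
  have hcard_p2 : Multiset.card q2.roots = Multiset.card s + Multiset.card p2.roots := by
    rw [hp2split, Multiset.card_add]
  -- real-rootedness of quotients
  have hg'rr : Multiset.card g'.roots = g'.natDegree := by omega
  have hp1rr : Multiset.card p1.roots = p1.natDegree := by omega
  have hp2rr : Multiset.card p2.roots = p2.natDegree := by omega
  -- CID transfer
  have hcid1 : CID g' p1 δ := by
    intro t
    have := h1 t
    rw [Nge_split hgsplit t, Nge_split hp1split t] at this
    constructor <;> omega
  have hcid2 : CID g' p2 δ := by
    intro t
    have := h2 t
    rw [Nge_split hgsplit t, Nge_split hp2split t] at this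
    constructor <;> omega
  obtain ⟨hsum0, hsumlc, hsumrr, hsumcid⟩ :=
    core_sq δ hδ g' p1 p2 hg'0 hg'rr (hlc_g ▸ hglc) hg'nd
      hp10 hp1rr (hlc_p1 ▸ hq1lc) hp20 hp2rr (hlc_p2 ▸ hq2lc) hcid1 hcid2
  have hsum : q1 + q2 = e * (p1 + p2) := by rw [hp1, hp2, mul_add]
  have hq0 : q1 + q2 ≠ 0 := by
    rw [hsum]; exact mul_ne_zero he0 hsum0
  have hsplit_sum : (q1 + q2).roots = s + (p1 + p2).roots := by
    conv_lhs => rw [hsum]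
    rw [roots_mul (hsum ▸ hq0), heroots]
  refine ⟨hq0, ?_, ?_, ?_⟩
  · rw [hsum, leadingCoeff_mul, hemon.leadingCoeff, one_mul]
    exact hsumlc
  · have hd : (q1 + q2).natDegree = e.natDegree + (p1 + p2).natDegree := by
      rw [hsum, natDegree_mul he0 hsum0]
    have hc : Multiset.card (q1 + q2).roots
        = Multiset.card s + Multiset.card (p1 + p2).roots := by
      rw [hsplit_sum, Multiset.card_add]
    omega
  · intro t
    have := hsumcid t
    rw [Nge_split hgsplit t, Nge_split hsplit_sum t]
    constructor <;> omega





lemma interlaces_of_cid {f g : ℝ[X]} (hf0 : f ≠ 0) (hg0 : g ≠ 0)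
    (hfrr : Multiset.card f.roots = f.natDegree) (hgrr : Multiset.card g.roots = g.natDegree)
    (hcid : CID f g 0) : Interlaces f g := by
  right; right
  have hlenf := rootsDesc_length f
  have hleng := rootsDesc_length g
  have hlen : (rootsDesc f).length ≤ (rootsDesc g).length ∧
      (rootsDesc g).length ≤ (rootsDesc f).length + 1 := by
    obtain ⟨t, ht⟩ := exists_bot (f.roots + g.roots)
    have h1 := Nge_eq_card_bot (f := f) (fun x hx => ht x (Multiset.mem_add.2 (Or.inl hx)))
    have h2 := Nge_eq_card_bot (f := g) (fun x hx => ht x (Multiset.mem_add.2 (Or.inr hx)))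
    have := hcid t
    omega
  refine ⟨Or.inr hfrr, Or.inr hgrr, hlen.1, hlen.2, ?_, ?_⟩
  · intro i hi
    set t := (rootsDesc f).getD i 0 with htdef
    have h1 : i < Nge f t := (getD_le_iff_Nge hi).1 (le_refl t)
    have h2 : i < Nge g t := by have := (hcid t).1; omega
    have hig : i < (rootsDesc g).length := by omega
    exact (getD_le_iff_Nge hig).2 h2
  · intro i hi
    set t := (rootsDesc g).getD (i+1) 0 with htdef
    have h1 : i + 1 < Nge g t := (getD_le_iff_Nge hi).1 (le_refl t)
    have h2 : i < Nge f t := by have := (hcid t).2; omega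
    have hif : i < (rootsDesc f).length := by
      have := Nge_le_card f t
      omega
    exact (getD_le_iff_Nge hif).2 h2
lemma cid_of_interlaces {f g : ℝ[X]} (hf0 : f ≠ 0) (hg0 : g ≠ 0)
    (hint : Interlaces f g) : CID f g 0 := by
  rcases hint with h | h | h
  · exact absurd h hf0
  · exact absurd h hg0
  obtain ⟨_, _, hlen1, hlen2, hA, hB⟩ := h
  have hlenf := rootsDesc_length f
  have hleng := rootsDesc_length g
  intro t
  constructor
  · show Nge f t ≤ Nge g t + 0
    rcases Nat.eq_zero_or_pos (Nge f t) with h0 | h0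
    · omega
    · have hi : Nge f t - 1 < (rootsDesc f).length := by
        have := Nge_le_card f t
        omega
      have ht1 : t ≤ (rootsDesc f).getD (Nge f t - 1) 0 := (getD_le_iff_Nge hi).2 (by omega)
      have ht2 : t ≤ (rootsDesc g).getD (Nge f t - 1) 0 := le_trans ht1 (hA _ hi)
      have hig : Nge f t - 1 < (rootsDesc g).length := by omega
      have := (getD_le_iff_Nge hig).1 ht2
      omega
  · show Nge g t + 0 ≤ Nge f t + 1
    rcases Nat.lt_or_ge (Nge g t) 2 with h0 | h0
    · omega
    · have hig : Nge g t - 1 < (rootsDesc g).length := by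
        have := Nge_le_card g t
        omega
      have ht1 : t ≤ (rootsDesc g).getD (Nge g t - 1) 0 := (getD_le_iff_Nge hig).2 (by omega)
      have hB' := hB (Nge g t - 2) (by omega)
      have heq : Nge g t - 2 + 1 = Nge g t - 1 := by omega
      rw [heq] at hB'
      have ht2 : t ≤ (rootsDesc f).getD (Nge g t - 2) 0 := le_trans ht1 hB'
      have hif : Nge g t - 2 < (rootsDesc f).length := by omega
      have := (getD_le_iff_Nge hif).1 ht2
      omega

lemma cid_flip {f g : ℝ[X]} (h : CID f g 0) : CID g f 1 := by
  intro t; have := h t; omega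

lemma cid_flip' {f g : ℝ[X]} (h : CID f g 1) : CID g f 0 := by
  intro t; have := h t; omega

lemma cid_self (f : ℝ[X]) : CID f f 0 := by
  intro t; omega

lemma cid_congr {g p p' : ℝ[X]} {δ : ℕ} (hroots : p'.roots = p.roots) (h : CID g p δ) :
    CID g p' δ := by
  intro t
  have hN : Nge p' t = Nge p t := by unfold Nge; rw [hroots]
  rw [hN]
  exact h t



/-- Part (a) of the lemma on interlacing sequences: any nonnegative linear
combination of an interlacing sequence of real-rooted polynomials with positive
leading coefficients is real-rooted; moreover it interlaces the last member and
is interlaced by the first. -/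
theorem nonneg_comb_of_interlacing (m : ℕ) (f : ℕ → Polynomial ℝ)
    (hrr : ∀ i ≤ m, RealRooted (f i))
    (hlead : ∀ i ≤ m, 0 < (f i).leadingCoeff)
    (hint : ∀ i j, i < j → j ≤ m → Interlaces (f i) (f j))
    (c : ℕ → ℝ) (hc : ∀ i ≤ m, 0 ≤ c i) :
    RealRooted (∑ i ∈ Finset.range (m + 1), C (c i) * f i) ∧
    Interlaces (∑ i ∈ Finset.range (m + 1), C (c i) * f i) (f m) ∧
    Interlaces (f 0) (∑ i ∈ Finset.range (m + 1), C (c i) * f i) := by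
  have hne : ∀ i, i ≤ m → f i ≠ 0 := fun i hi =>
    leadingCoeff_ne_zero.1 (ne_of_gt (hlead i hi))
  have hRRc : ∀ i, i ≤ m → Multiset.card (f i).roots = (f i).natDegree := by
    intro i hi
    rcases hrr i hi with h | h
    · exact absurd h (hne i hi)
    · exact h
  -- the two frame CID facts for each index
  have hcid0 : ∀ j, j ≤ m → CID (f 0) (f j) 0 := by
    intro j hj
    rcases Nat.eq_zero_or_pos j with h0 | h0
    · subst h0; exact cid_self (f 0)
    · exact cid_of_interlaces (hne 0 (by omega)) (hne j hj) (hint 0 j h0 hj)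
  have hcidm : ∀ j, j ≤ m → CID (f m) (f j) 1 := by
    intro j hj
    rcases Nat.lt_or_ge j m with h0 | h0
    · exact cid_flip (cid_of_interlaces (hne j hj) (hne m (le_refl m)) (hint j m h0 (le_refl m)))
    · have hjm : j = m := by omega
      subst hjm
      exact cid_flip (cid_self (f j))
  -- properties of scaled polynomials
  have hscale : ∀ j, j ≤ m → c j ≠ 0 →
      (C (c j) * f j ≠ 0 ∧ 0 < (C (c j) * f j).leadingCoeff ∧
       Multiset.card (C (c j) * f j).roots = (C (c j) * f j).natDegree ∧
       CID (f 0) (C (c j) * f j) 0 ∧ CID (f m) (C (c j) * f j) 1) := by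
    intro j hj hcj
    have hcjpos : 0 < c j := lt_of_le_of_ne (hc j hj) (Ne.symm hcj)
    have h0 : C (c j) * f j ≠ 0 := mul_ne_zero (by simpa using hcj) (hne j hj)
    have hroots : (C (c j) * f j).roots = (f j).roots := roots_C_mul _ hcj
    have hdeg : (C (c j) * f j).natDegree = (f j).natDegree := by
      rw [natDegree_mul (by simpa using hcj) (hne j hj), natDegree_C]
      omega
    refine ⟨h0, ?_, ?_, ?_, ?_⟩
    · rw [leadingCoeff_mul, leadingCoeff_C]
      exact mul_pos hcjpos (hlead j hj)
    · rw [hroots, hdeg]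
      exact hRRc j hj
    · exact cid_congr hroots (hcid0 j hj)
    · exact cid_congr hroots (hcidm j hj)
  -- main induction
  have main : ∀ k, k ≤ m →
      (∑ i ∈ Finset.range (k + 1), C (c i) * f i) = 0 ∨
      ((∑ i ∈ Finset.range (k + 1), C (c i) * f i) ≠ 0 ∧
       0 < (∑ i ∈ Finset.range (k + 1), C (c i) * f i).leadingCoeff ∧
       Multiset.card (∑ i ∈ Finset.range (k + 1), C (c i) * f i).roots =
         (∑ i ∈ Finset.range (k + 1), C (c i) * f i).natDegree ∧
       CID (f 0) (∑ i ∈ Finset.range (k + 1), C (c i) * f i) 0 ∧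
       CID (f m) (∑ i ∈ Finset.range (k + 1), C (c i) * f i) 1) := by
    intro k
    induction k with
    | zero =>
      intro _
      rw [Finset.sum_range_one]
      by_cases hc0 : c 0 = 0
      · left; rw [hc0]; simp
      · right; exact hscale 0 (by omega) hc0
    | succ k ih =>
      intro hk
      have ihk := ih (by omega)
      rw [Finset.sum_range_succ]
      set S := ∑ i ∈ Finset.range (k + 1), C (c i) * f i with hS
      by_cases hck : c (k+1) = 0
      · rw [hck]
        simpa using ihk
      · have hq2 := hscale (k+1) hk hck
        set q2 := C (c (k+1)) * f (k+1) with hq2def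
        rcases ihk with hzero | hSprops
        · rw [hzero, zero_add]
          right; exact hq2
        · right
          obtain ⟨hS0, hSlc, hSrr, hScid0, hScidm⟩ := hSprops
          obtain ⟨hq20, hq2lc, hq2rr, hq2cid0, hq2cidm⟩ := hq2
          have c0 := core 0 (by omega) (f 0) S q2 (hne 0 (by omega)) (hRRc 0 (by omega))
            (hlead 0 (by omega)) hS0 hSrr hSlc hq20 hq2rr hq2lc hScid0 hq2cid0
          have c1 := core 1 (by omega) (f m) S q2 (hne m (le_refl m)) (hRRc m (le_refl m))
            (hlead m (le_refl m)) hS0 hSrr hSlc hq20 hq2rr hq2lc hScidm hq2cidm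
          exact ⟨c0.1, c0.2.1, c0.2.2.1, c0.2.2.2, c1.2.2.2⟩
  rcases main m (le_refl m) with hzero | hprops
  · rw [hzero]
    refine ⟨Or.inl rfl, Or.inl rfl, Or.inr (Or.inl rfl)⟩
  · obtain ⟨h0, hlc, hrrS, hcid0S, hcidmS⟩ := hprops
    refine ⟨Or.inr hrrS, ?_, ?_⟩
    · exact interlaces_of_cid h0 (hne m (le_refl m)) hrrS (hRRc m (le_refl m))
        (cid_flip' hcidmS)
    · exact interlaces_of_cid (hne 0 (by omega)) h0 (hRRc 0 (by omega)) hrrS hcid0S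
end

section
/- For k ∈ [n+1] and positive real q, the polynomials A_{n,k}(x;q) := ∑_{w ∈ S_n, w(n)=k} q^{inv(w)} x^{des(w)} satisfy the recurrence A_{n+1,k}(x;q) = q^{n+1-k} ( ∑_{i=1}^{k-1} A_{n,i}(x;q) + x·∑_{i=k}^{n} A_{n,i}(x;q) ). -/
open Polynomial

/-- The number of inversions of a permutation `w` of `Fin n`:
pairs `i < j` with `w i > w j`. -/
def invP {n : ℕ} (w : Equiv.Perm (Fin n)) : ℕ :=
  (Finset.univ.filter fun p : Fin n × Fin n => p.1 < p.2 ∧ w p.2 < w p.1).card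

/-- The word `(w(1),…,w(n))` of a permutation, as a list of values in `{0,…,n-1}`. -/
def wordOf {n : ℕ} (w : Equiv.Perm (Fin n)) : List ℕ :=
  List.ofFn fun i => (w i).val

/-- The number of descents of a word: indices `i` with `L_i > L_{i+1}`. -/
def desL (L : List ℕ) : ℕ :=
  ((Finset.range (L.length - 1)).filter fun i => L.getD (i + 1) 0 < L.getD i 0).card

/-- `A_{n,k}(x;q) = ∑_{w ∈ S_n, w(n)=k} q^{inv(w)} x^{des(w)}`, where the value
`w(n)` of the last position is taken in `{1,…,n}` (`Fin n` values shifted by 1). -/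
noncomputable def Ank (q : ℝ) (n k : ℕ) : Polynomial ℝ :=
  ∑ w ∈ Finset.univ.filter
      (fun w : Equiv.Perm (Fin n) => (wordOf w).getD (n - 1) 0 + 1 = k),
    C (q ^ invP w) * X ^ desL (wordOf w)

section Aux

set_option maxHeartbeats 2000000

/-- Inserting the value `p` at the last position of a permutation of `Fin n`. -/
def insPerm {n : ℕ} (p : Fin (n+1)) (u : Equiv.Perm (Fin n)) : Equiv.Perm (Fin (n+1)) :=
  (finSuccEquiv' (Fin.last n)).trans ((Equiv.optionCongr u).trans (finSuccEquiv' p).symm)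

@[simp] lemma insPerm_castSucc {n : ℕ} (p : Fin (n+1)) (u : Equiv.Perm (Fin n)) (j : Fin n) :
    insPerm p u (Fin.castSucc j) = p.succAbove (u j) := by
  simp [insPerm, finSuccEquiv'_last_apply_castSucc]

@[simp] lemma insPerm_last {n : ℕ} (p : Fin (n+1)) (u : Equiv.Perm (Fin n)) :
    insPerm p u (Fin.last n) = p := by
  simp [insPerm, finSuccEquiv'_at]

/-- Deleting the last position of a permutation of `Fin (n+1)` (whose last value is `p`). -/
def delPerm {n : ℕ} (p : Fin (n+1)) (w : Equiv.Perm (Fin (n+1))) : Equiv.Perm (Fin n) :=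
  Equiv.removeNone (((finSuccEquiv' (Fin.last n)).symm.trans w).trans (finSuccEquiv' p))

lemma delPerm_insPerm {n : ℕ} (p : Fin (n+1)) (u : Equiv.Perm (Fin n)) :
    delPerm p (insPerm p u) = u := by
  have : ((finSuccEquiv' (Fin.last n)).symm.trans (insPerm p u)).trans (finSuccEquiv' p)
      = Equiv.optionCongr u := by
    ext o; cases o with
    | none => simp [finSuccEquiv'_at]
    | some a =>
        simp only [Equiv.trans_apply, finSuccEquiv'_symm_some, Fin.succAbove_last,
          insPerm_castSucc, finSuccEquiv'_succAbove, Equiv.optionCongr_apply, Option.map_some]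
  rw [delPerm, this, Equiv.removeNone_optionCongr]

lemma insPerm_delPerm {n : ℕ} (p : Fin (n+1)) (w : Equiv.Perm (Fin (n+1)))
    (hw : w (Fin.last n) = p) :
    insPerm p (delPerm p w) = w := by
  set E := ((finSuccEquiv' (Fin.last n)).symm.trans w).trans (finSuccEquiv' p) with hE
  have hnone : E none = none := by simp [hE, hw, finSuccEquiv'_at]
  ext x
  refine Fin.lastCases ?_ (fun j => ?_) x
  · simp [hw]
  · have hex : ∃ x', E (some j) = some x' := by
      rcases h : E (some j) with _ | b
      · exact absurd (E.injective (h.trans hnone.symm)) (by simp)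
      · exact ⟨b, rfl⟩
    have h1 : some (delPerm p w j) = E (some j) := Equiv.removeNone_some E hex
    have h2 : E (some j) = finSuccEquiv' p (w (Fin.castSucc j)) := by
      simp [hE, Fin.succAbove_last]
    rw [insPerm_castSucc]
    have : (finSuccEquiv' p).symm (some (delPerm p w j)) = w (Fin.castSucc j) := by
      rw [h1, h2, Equiv.symm_apply_apply]
    rw [finSuccEquiv'_symm_some] at this
    exact congrArg Fin.val this

lemma invP_sum {n : ℕ} (w : Equiv.Perm (Fin n)) :
    invP w = ∑ i : Fin n, ∑ j : Fin n, if i < j ∧ w j < w i then 1 else 0 := by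
  rw [invP, Finset.card_filter, Fintype.sum_prod_type]

lemma count_ge {n : ℕ} (p : Fin (n+1)) :
    (∑ v : Fin n, if p < p.succAbove v then 1 else 0) = n - p.val := by
  have h : ∀ v : Fin n, (p < p.succAbove v) ↔ (p.val ≤ v.val) := by
    intro v
    rw [Fin.lt_succAbove_iff_le_castSucc, Fin.le_castSucc_iff]
    constructor
    · intro h; exact Nat.lt_succ_iff.mp h
    · intro h; exact Nat.lt_succ_iff.mpr h
  simp only [h]
  rw [Fin.sum_univ_eq_sum_range (fun m => if p.val ≤ m then 1 else 0) n]
  rw [← Finset.card_filter]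
  have : (Finset.range n).filter (fun m => p.val ≤ m) = Finset.Ico p.val n := by
    ext m; simp [Finset.mem_Ico, Finset.mem_range]; omega
  rw [this, Nat.card_Ico]

lemma invP_insPerm {n : ℕ} (p : Fin (n+1)) (u : Equiv.Perm (Fin n)) :
    invP (insPerm p u) = invP u + (n - p.val) := by
  rw [invP_sum]
  rw [Fin.sum_univ_castSucc
    (f := fun i => ∑ j : Fin (n+1), if i < j ∧ insPerm p u j < insPerm p u i then 1 else 0)]
  have hin : ∀ i : Fin (n+1), (∑ j : Fin (n+1), if i < j ∧ insPerm p u j < insPerm p u i then 1 else 0)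
      = (∑ b : Fin n, if i < Fin.castSucc b ∧ insPerm p u (Fin.castSucc b) < insPerm p u i then 1 else 0)
        + (if i < Fin.last n ∧ insPerm p u (Fin.last n) < insPerm p u i then 1 else 0) := fun i =>
    Fin.sum_univ_castSucc (f := fun j => if i < j ∧ insPerm p u j < insPerm p u i then 1 else 0)
  simp only [hin]
  rw [Finset.sum_add_distrib]
  have h1 : (∑ a : Fin n, ∑ b : Fin n,
      if Fin.castSucc a < Fin.castSucc b ∧ insPerm p u (Fin.castSucc b) < insPerm p u (Fin.castSucc a) then 1 else 0)
      = invP u := by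
    rw [invP_sum]
    congr 1; ext a; congr 1; ext b
    simp only [insPerm_castSucc, Fin.castSucc_lt_castSucc_iff, Fin.succAbove_lt_succAbove_iff]
  have h2 : (∑ a : Fin n,
      if Fin.castSucc a < Fin.last n ∧ insPerm p u (Fin.last n) < insPerm p u (Fin.castSucc a) then 1 else 0)
      = n - p.val := by
    have : ∀ a : Fin n,
        (if Fin.castSucc a < Fin.last n ∧ insPerm p u (Fin.last n) < insPerm p u (Fin.castSucc a) then 1 else 0)
        = if p < p.succAbove (u a) then 1 else 0 := by
      intro a
      simp [Fin.castSucc_lt_last]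
    simp only [this]
    rw [Equiv.sum_comp u (fun v => if p < p.succAbove v then 1 else 0)]
    exact count_ge p
  have h3 : (∑ b : Fin n,
      if Fin.last n < Fin.castSucc b ∧ insPerm p u (Fin.castSucc b) < insPerm p u (Fin.last n) then 1 else 0) = 0 := by
    apply Finset.sum_eq_zero; intro b _
    simp [(Fin.castSucc_lt_last b).not_gt]
  have h4 : (if Fin.last n < Fin.last n ∧ insPerm p u (Fin.last n) < insPerm p u (Fin.last n) then 1 else 0) = 0 := by
    simp
  rw [h3, h4, h1, h2]; ring

lemma wordOf_getD {n : ℕ} (w : Equiv.Perm (Fin n)) (i : ℕ) (h : i < n) :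
    (wordOf w).getD i 0 = (w ⟨i, h⟩).val := by
  rw [wordOf, List.getD_eq_getElem _ _ (by simpa using h)]
  simp

lemma wordOf_getD' {n : ℕ} (w : Equiv.Perm (Fin n)) (i : ℕ) :
    (wordOf w).getD i 0 = if h : i < n then (w ⟨i, h⟩).val else 0 := by
  split
  · exact wordOf_getD w i ‹_›
  · rw [wordOf, List.getD_eq_default]
    simpa using by omega

lemma desL_sum {n : ℕ} (w : Equiv.Perm (Fin n)) :
    desL (wordOf w) = ∑ i ∈ Finset.range (n - 1),
      if (wordOf w).getD (i + 1) 0 < (wordOf w).getD i 0 then 1 else 0 := by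
  rw [desL, Finset.card_filter]
  congr 1
  simp [wordOf]

lemma desL_insPerm {n : ℕ} (hn : 1 ≤ n) (p : Fin (n+1)) (u : Equiv.Perm (Fin n)) :
    desL (wordOf (insPerm p u)) =
      desL (wordOf u) + (if p.val ≤ (wordOf u).getD (n-1) 0 then 1 else 0) := by
  set w := insPerm p u with hwdef
  rw [desL_sum]
  have hrange : n + 1 - 1 = (n - 1) + 1 := by omega
  rw [hrange, Finset.sum_range_succ]
  congr 1
  · rw [desL_sum]
    apply Finset.sum_congr rfl
    intro i hi
    rw [Finset.mem_range] at hi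
    have hi1 : i + 1 < n := by omega
    have hi0 : i < n := by omega
    simp only [wordOf_getD']
    rw [dif_pos (show i+1 < n+1 by omega), dif_pos (show i < n+1 by omega),
      dif_pos hi1, dif_pos hi0]
    have e1 : (⟨i+1, by omega⟩ : Fin (n+1)) = Fin.castSucc ⟨i+1, hi1⟩ := rfl
    have e0 : (⟨i, by omega⟩ : Fin (n+1)) = Fin.castSucc ⟨i, hi0⟩ := rfl
    rw [e1, e0, hwdef, insPerm_castSucc, insPerm_castSucc]
    congr 1
    rw [← Fin.lt_def, ← Fin.lt_def, Fin.succAbove_lt_succAbove_iff]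
  · have hn1 : n - 1 < n := by omega
    have elast : (⟨n - 1 + 1, by omega⟩ : Fin (n+1)) = Fin.last n := by
      ext; simp; omega
    have e0 : (⟨n - 1, by omega⟩ : Fin (n+1)) = Fin.castSucc ⟨n-1, hn1⟩ := rfl
    simp only [wordOf_getD']
    rw [dif_pos (show n-1+1 < n+1 by omega), dif_pos (show n-1 < n+1 by omega),
      dif_pos hn1, elast, e0, hwdef, insPerm_castSucc, insPerm_last]
    have : (p.val < (p.succAbove (u ⟨n-1, hn1⟩)).val) ↔ (p.val ≤ (u ⟨n-1, hn1⟩).val) := by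
      rw [← Fin.lt_def, Fin.lt_succAbove_iff_le_castSucc, Fin.le_castSucc_iff]
      exact ⟨Nat.lt_succ_iff.mp, Nat.lt_succ_iff.mpr⟩
    simp only [this]

end Aux

set_option maxHeartbeats 2000000 in
/-- The recurrence
`A_{n+1,k}(x;q) = q^{n+1-k} ( ∑_{i=1}^{k-1} A_{n,i}(x;q) + x ∑_{i=k}^{n} A_{n,i}(x;q) )`
for `k ∈ [n+1]` and positive real `q`. -/
theorem Ank_recurrence (n : ℕ) (hn : 1 ≤ n) (q : ℝ) (hq : 0 < q)
    (k : ℕ) (hk1 : 1 ≤ k) (hk2 : k ≤ n + 1) :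
    Ank q (n + 1) k =
      C (q ^ (n + 1 - k)) *
        (∑ i ∈ Finset.Icc 1 (k - 1), Ank q n i +
          X * ∑ i ∈ Finset.Icc k n, Ank q n i) := by
  classical
  set p : Fin (n+1) := ⟨k - 1, by omega⟩ with hp
  set F : Equiv.Perm (Fin n) → Polynomial ℝ :=
    fun u => C (q ^ invP u) * X ^ desL (wordOf u) with hF
  have hlv : ∀ u : Equiv.Perm (Fin n), (wordOf u).getD (n - 1) 0 < n := by
    intro u
    rw [wordOf_getD u (n-1) (by omega)]
    exact (u ⟨n-1, by omega⟩).isLt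
  -- rewrite the two sums over Icc as sums over filtered permutation sets
  have hIcc1 : ∑ i ∈ Finset.Icc 1 (k - 1), Ank q n i
      = ∑ u ∈ Finset.univ.filter
          (fun u : Equiv.Perm (Fin n) => ¬ (k ≤ (wordOf u).getD (n - 1) 0 + 1)), F u := by
    rw [show (∑ i ∈ Finset.Icc 1 (k - 1), Ank q n i)
        = ∑ i ∈ Finset.Icc 1 (k-1), ∑ u ∈ Finset.univ.filter
            (fun u : Equiv.Perm (Fin n) => (wordOf u).getD (n - 1) 0 + 1 = i), F u from rfl]
    rw [Finset.sum_fiberwise_eq_sum_filter]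
    apply Finset.sum_congr _ (fun _ _ => rfl)
    apply Finset.filter_congr
    intro u _
    have := hlv u
    simp only [Finset.mem_Icc]
    omega
  have hIcc2 : ∑ i ∈ Finset.Icc k n, Ank q n i
      = ∑ u ∈ Finset.univ.filter
          (fun u : Equiv.Perm (Fin n) => k ≤ (wordOf u).getD (n - 1) 0 + 1), F u := by
    rw [show (∑ i ∈ Finset.Icc k n, Ank q n i)
        = ∑ i ∈ Finset.Icc k n, ∑ u ∈ Finset.univ.filter
            (fun u : Equiv.Perm (Fin n) => (wordOf u).getD (n - 1) 0 + 1 = i), F u from rfl]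
    rw [Finset.sum_fiberwise_eq_sum_filter]
    apply Finset.sum_congr _ (fun _ _ => rfl)
    apply Finset.filter_congr
    intro u _
    have := hlv u
    simp only [Finset.mem_Icc]
    omega
  rw [hIcc1, hIcc2]
  have hR : C (q ^ (n + 1 - k)) *
        (∑ u ∈ Finset.univ.filter
            (fun u : Equiv.Perm (Fin n) => ¬ (k ≤ (wordOf u).getD (n - 1) 0 + 1)), F u +
          X * ∑ u ∈ Finset.univ.filter
            (fun u : Equiv.Perm (Fin n) => k ≤ (wordOf u).getD (n - 1) 0 + 1), F u)
      = ∑ u : Equiv.Perm (Fin n),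
          (if k ≤ (wordOf u).getD (n - 1) 0 + 1 then C (q ^ (n + 1 - k)) * (X * F u)
            else C (q ^ (n + 1 - k)) * F u) := by
    rw [mul_add, Finset.mul_sum, ← mul_assoc, Finset.mul_sum,
      ← Finset.sum_filter_add_sum_filter_not Finset.univ
        (fun u : Equiv.Perm (Fin n) => k ≤ (wordOf u).getD (n - 1) 0 + 1)
        (fun u => if k ≤ (wordOf u).getD (n - 1) 0 + 1 then C (q ^ (n + 1 - k)) * (X * F u)
            else C (q ^ (n + 1 - k)) * F u), add_comm]
    congr 1
    · exact Finset.sum_congr rfl (fun u hu => by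
        rw [if_pos (Finset.mem_filter.mp hu).2, mul_assoc])
    · exact Finset.sum_congr rfl (fun u hu => by
        rw [if_neg (Finset.mem_filter.mp hu).2])
  rw [hR]
  -- now the RHS is a single sum over all of S_n; set up the bijection
  rw [show Ank q (n+1) k = ∑ w ∈ Finset.univ.filter
      (fun w : Equiv.Perm (Fin (n+1)) => (wordOf w).getD (n + 1 - 1) 0 + 1 = k),
      C (q ^ invP w) * X ^ desL (wordOf w) from rfl]
  have elast : (⟨n+1-1, by omega⟩ : Fin (n+1)) = Fin.last n := by ext; simp
  refine (Finset.sum_nbij' (fun u => insPerm p u) (fun w => delPerm p w) ?_ ?_ ?_ ?_ ?_).symm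
  · intro u _
    rw [Finset.mem_filter]
    refine ⟨Finset.mem_univ _, ?_⟩
    rw [wordOf_getD _ (n+1-1) (by omega), elast, insPerm_last, hp]
    simp only
    omega
  · intro w _; exact Finset.mem_univ _
  · intro u _; exact delPerm_insPerm p u
  · intro w hw
    rw [Finset.mem_filter] at hw
    apply insPerm_delPerm
    have h2 := hw.2
    rw [wordOf_getD _ (n+1-1) (by omega), elast] at h2
    ext
    rw [hp]
    simp only
    omega
  · intro u _
    rw [invP_insPerm, desL_insPerm hn]
    have hpv : n - p.val = n + 1 - k := by rw [hp]; simp only; omega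
    have hcond : (k ≤ (wordOf u).getD (n-1) 0 + 1) ↔ (p.val ≤ (wordOf u).getD (n-1) 0) := by
      rw [hp]; simp only; omega
    by_cases h : p.val ≤ (wordOf u).getD (n-1) 0
    · rw [if_pos h, if_pos (hcond.mpr h), hpv, hF]
      simp only
      rw [pow_add, pow_add, C_mul, pow_one]
      ring
    · rw [if_neg h, if_neg (fun hc => h (hcond.mp hc)), hpv, hF]
      simp only
      rw [pow_add, C_mul, add_zero]
      ring
end

section
/- The polynomials h^B_{n,k}(x) = ∑_{σ ∈ B_n, σ_n = k} x^{des(σ)} satisfy, for k ∈ [n+1], the recurrence h^B_{n+1,k}(x) = (2n-2k+3)·( ∑_{i=1}^{k-1} h^B_{n,i}(x) + x·∑_{i=k}^{n} h^B_{n,i}(x) ). -/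
open Polynomial

/-- The number of (weak) descents of a word `σ`: indices `i` with `σ_i ≥ σ_{i+1}`. -/
def desW (σ : List ℕ) : ℕ :=
  ((Finset.range (σ.length - 1)).filter fun i => σ.getD (i + 1) 0 ≤ σ.getD i 0).card

/-- The `k`-th factor of `B_n`: the multiset with `2k-2i+1` copies of `i` for `1 ≤ i ≤ k`. -/
def factorB (k : ℕ) : Multiset ℕ :=
  (Finset.Icc 1 k).sum fun i => Multiset.replicate (2 * k - 2 * i + 1) i

/-- The multiset `B_n`, product of `factorB 1, …, factorB n`. -/
def Bn (n : ℕ) : Multiset (List ℕ) :=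
  multisetProd ((List.range n).map fun k => factorB (k + 1))

/-- `h^B_{n,k}(x) = ∑_{σ ∈ B_n, σ_n = k} x^{des σ}` (sum over elements of `B_n`
whose last entry equals `k`). -/
noncomputable def hBnk (n k : ℕ) : Polynomial ℝ :=
  (((Bn n).filter fun σ => σ.getD (σ.length - 1) 0 = k).map
    fun σ => (X : Polynomial ℝ) ^ desW σ).sum

lemma multisetProd_append_singleton (l : List (Multiset ℕ)) (m : Multiset ℕ) :
    multisetProd (l ++ [m]) = (multisetProd l).bind fun τ => m.map (fun a => τ ++ [a]) := by
  induction l with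
  | nil => simp [multisetProd]
  | cons m0 l ih =>
    rw [List.cons_append]
    show (m0.bind fun a => (multisetProd (l ++ [m])).map (a :: ·)) =
      (m0.bind fun a => (multisetProd l).map (a :: ·)).bind fun τ => m.map (fun a => τ ++ [a])
    rw [ih]
    simp only [Multiset.map_bind, Multiset.bind_assoc, Multiset.bind_map, Multiset.map_map,
      Function.comp_def, List.cons_append]

lemma length_mem_multisetProd (ms : List (Multiset ℕ)) (τ : List ℕ)
    (h : τ ∈ multisetProd ms) : τ.length = ms.length := by
  induction ms generalizing τ with
  | nil => simp [multisetProd] at h; simp [h]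
  | cons m ms ih =>
    simp only [multisetProd, Multiset.mem_bind, Multiset.mem_map] at h
    obtain ⟨a, _, σ, hσ, rfl⟩ := h
    simp [ih σ hσ]

lemma length_mem_Bn {n : ℕ} {τ : List ℕ} (h : τ ∈ Bn n) : τ.length = n := by
  have := length_mem_multisetProd _ _ h
  simpa using this

lemma Bn_succ (n : ℕ) :
    Bn (n + 1) = (Bn n).bind fun τ => (factorB (n + 1)).map (fun a => τ ++ [a]) := by
  unfold Bn
  rw [List.range_succ, List.map_append]
  exact multisetProd_append_singleton _ _

lemma mem_factorB {j k : ℕ} : j ∈ factorB k ↔ j ∈ Finset.Icc 1 k := by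
  simp only [factorB, Multiset.mem_sum, Multiset.mem_replicate, Finset.mem_Icc]
  constructor
  · rintro ⟨i, hi, -, rfl⟩; exact hi
  · intro h; exact ⟨j, h, by omega, rfl⟩

lemma count_factorB {j k : ℕ} (h1 : 1 ≤ j) (h2 : j ≤ k) :
    (factorB k).count j = 2 * k - 2 * j + 1 := by
  rw [factorB, Multiset.count_sum']
  rw [Finset.sum_eq_single j]
  · simp [Multiset.count_replicate]
  · intro b _ hb; rw [Multiset.count_replicate, if_neg hb]
  · intro h; exact absurd (Finset.mem_Icc.mpr ⟨h1, h2⟩) h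

lemma desW_append_singleton (τ : List ℕ) (hτ : τ ≠ []) (k : ℕ) :
    desW (τ ++ [k]) = desW τ + if k ≤ τ.getD (τ.length - 1) 0 then 1 else 0 := by
  obtain ⟨m, hm⟩ : ∃ m, τ.length = m + 1 :=
    ⟨τ.length - 1, by cases τ <;> simp_all⟩
  unfold desW
  rw [List.length_append]
  simp only [List.length_singleton, hm]
  have h1 : m + 1 + 1 - 1 = m + 1 := rfl
  rw [h1, Finset.range_add_one, Finset.filter_insert]
  have hgetD : ∀ i, i < m + 1 → (τ ++ [k]).getD i 0 = τ.getD i 0 := by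
    intro i hi
    rw [List.getD_append]
    omega
  have hlast : (τ ++ [k]).getD (m + 1) 0 = k := by
    rw [List.getD_append_right _ _ _ _ (by omega)]
    simp [hm]
  have hfilt : (Finset.range m).filter
      (fun i => (τ ++ [k]).getD (i + 1) 0 ≤ (τ ++ [k]).getD i 0) =
      (Finset.range m).filter (fun i => τ.getD (i + 1) 0 ≤ τ.getD i 0) := by
    apply Finset.filter_congr
    intro i hi
    rw [Finset.mem_range] at hi
    rw [hgetD i (by omega), hgetD (i + 1) (by omega)]
  rw [hlast, hgetD m (by omega)]
  have h2 : m + 1 - 1 = m := rfl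
  rw [h2]
  split
  · rw [Finset.card_insert_of_notMem (by simp), hfilt]
  · rw [hfilt]; simp

lemma getD_last_append (τ : List ℕ) (j : ℕ) :
    (τ ++ [j]).getD ((τ ++ [j]).length - 1) 0 = j := by
  rw [List.length_append]
  simp only [List.length_singleton, Nat.add_sub_cancel]
  rw [List.getD_append_right _ _ _ _ (le_refl _)]
  simp

lemma last_mem_Icc {n : ℕ} (hn : 1 ≤ n) {τ : List ℕ} (h : τ ∈ Bn n) :
    τ.getD (τ.length - 1) 0 ∈ Finset.Icc 1 n := by
  obtain ⟨m, rfl⟩ : ∃ m, n = m + 1 := ⟨n - 1, by omega⟩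
  rw [Bn_succ] at h
  simp only [Multiset.mem_bind, Multiset.mem_map] at h
  obtain ⟨σ, hσ, j, hj, rfl⟩ := h
  rw [getD_last_append]
  exact mem_factorB.mp hj

lemma sum_map_filter {M : Type*} [AddCommMonoid M] (s : Multiset (List ℕ))
    (p : List ℕ → Prop) [DecidablePred p] (f : List ℕ → M) :
    ((s.filter p).map f).sum = (s.map fun a => if p a then f a else 0).sum := by
  induction s using Multiset.induction_on with
  | empty => simp
  | cons a s ih => by_cases h : p a <;> simp [Multiset.filter_cons, h, ih]

lemma sum_map_ite_count {M : Type*} [AddCommMonoid M] (m : Multiset ℕ) (k : ℕ) (c : M) :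
    (m.map fun j => if j = k then c else 0).sum = m.count k • c := by
  induction m using Multiset.induction_on with
  | empty => simp
  | cons a s ih =>
    by_cases h : a = k
    · subst h; simp [Multiset.count_cons, ih, succ_nsmul, add_comm]
    · simp [Multiset.count_cons, h, Ne.symm h, ih]

lemma finsum_sum_map {ι M : Type*} [AddCommMonoid M] (s : Finset ι) (m : Multiset (List ℕ))
    (f : ι → List ℕ → M) :
    ∑ i ∈ s, (m.map (f i)).sum = (m.map fun a => ∑ i ∈ s, f i a).sum := by
  induction m using Multiset.induction_on with
  | empty => simp
  | cons a t ih => simp [Finset.sum_add_distrib, ih]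

/-- The recurrence
`h^B_{n+1,k}(x) = (2n-2k+3)·( ∑_{i=1}^{k-1} h^B_{n,i}(x) + x·∑_{i=k}^{n} h^B_{n,i}(x) )`
for `k ∈ [n+1]` (the coefficient is written `2(n+1-k)+1 = 2n-2k+3`). -/
theorem hBnk_recurrence (n : ℕ) (hn : 1 ≤ n) (k : ℕ) (hk1 : 1 ≤ k) (hk2 : k ≤ n + 1) :
    hBnk (n + 1) k =
      C ((2 * (n + 1 - k) + 1 : ℕ) : ℝ) *
        (∑ i ∈ Finset.Icc 1 (k - 1), hBnk n i +
          X * ∑ i ∈ Finset.Icc k n, hBnk n i) := by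
  have hc : (factorB (n + 1)).count k = 2 * (n + 1 - k) + 1 := by
    rw [count_factorB hk1 hk2]; omega
  -- LHS reduction
  have lhs_eq : hBnk (n + 1) k = ((Bn n).map fun τ =>
      (2 * (n + 1 - k) + 1) • (X : Polynomial ℝ) ^
        (desW τ + if k ≤ τ.getD (τ.length - 1) 0 then 1 else 0)).sum := by
    rw [hBnk, sum_map_filter, Bn_succ, Multiset.map_bind, Multiset.sum_bind]
    apply congrArg
    apply Multiset.map_congr rfl
    intro τ hτ
    have hlen : τ.length = n := length_mem_Bn hτ
    have hne : τ ≠ [] := by intro h; rw [h] at hlen; simp at hlen; omega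
    have : ((fun σ => if σ.getD (σ.length - 1) 0 = k then (X : Polynomial ℝ) ^ desW σ else 0) ∘
        fun a => τ ++ [a]) = fun j => if j = k then
          (X : Polynomial ℝ) ^ (desW τ + if k ≤ τ.getD (τ.length - 1) 0 then 1 else 0) else 0 := by
      funext j
      simp only [Function.comp, getD_last_append]
      by_cases h : j = k
      · subst h
        rw [if_pos rfl, if_pos rfl, desW_append_singleton τ hne j]
      · rw [if_neg h, if_neg h]
    rw [Multiset.map_map, this, sum_map_ite_count, hc]
  rw [lhs_eq]
  -- RHS reduction
  have key : ∀ i, hBnk n i = ((Bn n).map fun τ =>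
      if τ.getD (τ.length - 1) 0 = i then (X : Polynomial ℝ) ^ desW τ else 0).sum := fun i =>
    sum_map_filter _ _ _
  simp only [key]
  rw [finsum_sum_map, finsum_sum_map, ← Multiset.sum_map_mul_left, ← Multiset.sum_map_add,
    ← Multiset.sum_map_mul_left]
  apply congrArg
  apply Multiset.map_congr rfl
  intro τ hτ
  have hL := last_mem_Icc hn hτ
  set L := τ.getD (τ.length - 1) 0 with hLdef
  rw [Finset.mem_Icc] at hL
  have hsum1 : (∑ i ∈ Finset.Icc 1 (k - 1), if L = i then (X : Polynomial ℝ) ^ desW τ else 0)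
      = if L ∈ Finset.Icc 1 (k - 1) then (X : Polynomial ℝ) ^ desW τ else 0 :=
    Finset.sum_ite_eq _ _ _
  have hsum2 : (∑ i ∈ Finset.Icc k n, if L = i then (X : Polynomial ℝ) ^ desW τ else 0)
      = if L ∈ Finset.Icc k n then (X : Polynomial ℝ) ^ desW τ else 0 :=
    Finset.sum_ite_eq _ _ _
  rw [hsum1, hsum2]
  by_cases h : k ≤ L
  · rw [if_pos h, if_neg (by rw [Finset.mem_Icc]; omega),
      if_pos (Finset.mem_Icc.mpr ⟨h, hL.2⟩)]
    rw [nsmul_eq_mul, Polynomial.C_eq_natCast]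
    push_cast
    ring
  · rw [if_neg h, if_pos (Finset.mem_Icc.mpr ⟨hL.1, by omega⟩),
      if_neg (by rw [Finset.mem_Icc]; omega)]
    rw [nsmul_eq_mul, Polynomial.C_eq_natCast]
    push_cast
    ring
end

section
/- Let h be a polynomial with nonnegative real coefficients, constant term 1, and degree d ≤ n-1, which is real-rooted. Define p(x) = (1+n·x)·h(x) + (x - x²)·h'(x). Then p is real-rooted of degree d+1, has nonnegative coefficients, and is interlaced by h. -/
open Polynomial

lemma prod_erase_sign (S : Finset ℝ) (a : ℝ) :
    0 < (∏ b ∈ S.erase a, (a - b)) * (-1) ^ (S.filter (a < ·)).card := by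
  classical
  set E := S.erase a with hE
  have hsplit := Finset.prod_filter_mul_prod_filter_not E (fun b => a < b) (fun b => a - b)
  have hEf : E.filter (fun b => a < b) = S.filter (fun b => a < b) := by
    ext b
    simp only [hE, Finset.mem_filter, Finset.mem_erase]
    constructor
    · rintro ⟨⟨_, hb⟩, hab⟩; exact ⟨hb, hab⟩
    · rintro ⟨hb, hab⟩; exact ⟨⟨ne_of_gt hab, hb⟩, hab⟩
  have h2 : 0 < ∏ b ∈ E.filter (fun b => ¬ a < b), (a - b) := by
    apply Finset.prod_pos
    intro b hb
    simp only [Finset.mem_filter, hE, Finset.mem_erase] at hb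
    have : b < a := lt_of_le_of_ne (not_lt.1 hb.2) hb.1.1
    linarith
  have h1 : ∏ b ∈ E.filter (fun b => a < b), (a - b)
      = (-1) ^ (S.filter (a < ·)).card * ∏ b ∈ S.filter (fun b => a < b), (b - a) := by
    rw [hEf]
    rw [show (∏ b ∈ S.filter (fun b => a < b), (a - b))
        = ∏ b ∈ S.filter (fun b => a < b), (-1) * (b - a) by
      apply Finset.prod_congr rfl; intro b _; ring]
    rw [Finset.prod_mul_distrib, Finset.prod_const]
  have h3 : 0 < ∏ b ∈ S.filter (fun b => a < b), (b - a) := by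
    apply Finset.prod_pos
    intro b hb
    simp only [Finset.mem_filter] at hb
    linarith [hb.2]
  have hsq : ((-1 : ℝ)) ^ (S.filter (a < ·)).card * (-1) ^ (S.filter (a < ·)).card = 1 := by
    rw [← pow_add]
    exact Even.neg_one_pow ⟨(S.filter (a < ·)).card, rfl⟩
  have : (∏ b ∈ E, (a - b)) * (-1) ^ (S.filter (a < ·)).card
      = (∏ b ∈ S.filter (fun b => a < b), (b - a))
        * (∏ b ∈ E.filter (fun b => ¬ a < b), (a - b)) := by
    rw [← hsplit, h1]
    linear_combination (∏ b ∈ S.filter (fun b => a < b), (b - a))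
      * (∏ b ∈ E.filter (fun b => ¬ a < b), (a - b)) * hsq
  rw [this]
  exact mul_pos h3 h2

lemma eval_pos_of_nonneg_coeff (f : Polynomial ℝ) (hc : ∀ i, 0 ≤ f.coeff i)
    (h0 : 0 < f.coeff 0) (x : ℝ) (hx : 0 ≤ x) : 0 < f.eval x := by
  rw [Polynomial.eval_eq_sum_range]
  apply Finset.sum_pos'
  · intro i _
    exact mul_nonneg (hc i) (pow_nonneg hx i)
  · refine ⟨0, Finset.mem_range.2 (Nat.succ_pos _), ?_⟩
    simpa using h0

lemma roots_neg (f : Polynomial ℝ) (hc : ∀ i, 0 ≤ f.coeff i) (h0 : 0 < f.coeff 0) :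
    ∀ r ∈ f.roots, r < 0 := by
  intro r hr
  by_contra hr0
  have := eval_pos_of_nonneg_coeff f hc h0 r (not_lt.1 hr0)
  have hroot : f.eval r = 0 := (Polynomial.isRoot_of_mem_roots hr)
  linarith

lemma exists_pos_far (f : Polynomial ℝ) (hd : 0 < f.natDegree) (hl : 0 < f.leadingCoeff)
    (M : ℝ) : ∃ x, M < x ∧ 0 < f.eval x := by
  have hdeg : 0 < f.degree := Polynomial.natDegree_pos_iff_degree_pos.1 hd
  have ht := Polynomial.tendsto_atTop_of_leadingCoeff_nonneg f hdeg hl.le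
  have h1 : ∀ᶠ x in Filter.atTop, 0 < f.eval x := ht.eventually_gt_atTop 0
  have h2 : ∀ᶠ x : ℝ in Filter.atTop, M < x := Filter.eventually_gt_atTop M
  obtain ⟨x, hx1, hx2⟩ := (h1.and h2).exists
  exact ⟨x, hx2, hx1⟩

lemma exists_neg_far (f : Polynomial ℝ) (hd : 0 < f.natDegree) (hl : 0 < f.leadingCoeff)
    (M : ℝ) : ∃ x, x < M ∧ 0 < (-1 : ℝ) ^ f.natDegree * f.eval x := by
  classical
  set g : Polynomial ℝ := C ((-1 : ℝ) ^ f.natDegree) * f.comp (-X) with hg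
  have hfne : f ≠ 0 := fun h => by simp [h] at hd
  have hndc : (f.comp (-X)).natDegree = f.natDegree := by
    rw [Polynomial.natDegree_comp]
    simp [Polynomial.natDegree_neg]
  have hsm : ((-1 : ℝ) ^ f.natDegree) ≠ 0 := by
    intro h
    have := neg_one_pow_eq_one_iff_even (R := ℝ) (n := f.natDegree)
    simp [h] at this
    have h2 : ((-1:ℝ)) ^ f.natDegree ≠ 0 := pow_ne_zero _ (by norm_num)
    exact h2 h
  have hnd : g.natDegree = f.natDegree := by
    rw [hg, Polynomial.natDegree_C_mul hsm, hndc]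
  have hlc : g.leadingCoeff = f.leadingCoeff := by
    rw [hg, Polynomial.leadingCoeff_mul, Polynomial.leadingCoeff_C]
    rw [Polynomial.leadingCoeff_comp (by simp [Polynomial.natDegree_neg])]
    have h1 : (-X : Polynomial ℝ).leadingCoeff = -1 := by
      simp [Polynomial.leadingCoeff_neg]
    rw [h1]
    have := Even.neg_one_pow (α := ℝ) ⟨f.natDegree, rfl⟩
    rw [pow_add] at this
    nlinarith [this]
  have hdeg : 0 < g.degree := Polynomial.natDegree_pos_iff_degree_pos.1 (by rw [hnd]; exact hd)
  have ht := Polynomial.tendsto_atTop_of_leadingCoeff_nonneg g hdeg (by rw [hlc]; exact hl.le)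
  have h1 : ∀ᶠ x in Filter.atTop, 0 < g.eval x := ht.eventually_gt_atTop 0
  have h2 : ∀ᶠ x : ℝ in Filter.atTop, -M < x := Filter.eventually_gt_atTop (-M)
  obtain ⟨y, hy1, hy2⟩ := (h1.and h2).exists
  refine ⟨-y, by linarith, ?_⟩
  have : g.eval y = (-1 : ℝ) ^ f.natDegree * f.eval (-y) := by
    rw [hg]
    simp [Polynomial.eval_comp]
  rw [← this]
  exact hy1

lemma exists_root_between (f : Polynomial ℝ) {a b : ℝ} (hab : a < b)
    (hsign : f.eval a * f.eval b < 0) : ∃ c, a < c ∧ c < b ∧ f.eval c = 0 := by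
  have hcont : ContinuousOn (fun x => f.eval x) (Set.Icc a b) :=
    (Polynomial.continuous f).continuousOn
  rcases mul_neg_iff.1 hsign with ⟨ha, hb⟩ | ⟨ha, hb⟩
  · have := intermediate_value_Ioo' hab.le hcont
    have h0 : (0:ℝ) ∈ Set.Ioo (f.eval b) (f.eval a) := ⟨hb, ha⟩
    obtain ⟨c, hc, hc0⟩ := this h0
    exact ⟨c, hc.1, hc.2, hc0⟩
  · have := intermediate_value_Ioo hab.le hcont
    have h0 : (0:ℝ) ∈ Set.Ioo (f.eval a) (f.eval b) := ⟨ha, hb⟩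
    obtain ⟨c, hc, hc0⟩ := this h0
    exact ⟨c, hc.1, hc.2, hc0⟩


lemma pyr_coeff_zero (n : ℕ) (h : Polynomial ℝ) :
    ((1 + (n : ℝ) • X) * h + (X - X ^ 2) * derivative h).coeff 0 = h.coeff 0 := by
  simp [Polynomial.mul_coeff_zero, Polynomial.coeff_smul]

lemma pyr_coeff_succ (n : ℕ) (h : Polynomial ℝ) (i : ℕ) :
    ((1 + (n : ℝ) • X) * h + (X - X ^ 2) * derivative h).coeff (i + 1)
      = ((i : ℝ) + 2) * h.coeff (i + 1) + ((n : ℝ) - i) * h.coeff i := by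
  have hrw : (1 + (n : ℝ) • X) * h + (X - X ^ 2) * derivative h
      = (h + (n : ℝ) • (X * h)) + (X * derivative h - X ^ 2 * derivative h) := by
    rw [add_mul, one_mul, sub_mul, smul_mul_assoc]
  rw [hrw]
  rw [Polynomial.coeff_add, Polynomial.coeff_add, Polynomial.coeff_sub,
    Polynomial.coeff_smul, Polynomial.coeff_X_mul, Polynomial.coeff_X_mul,
    Polynomial.coeff_derivative]
  cases i with
  | zero =>
    have h2 : (X ^ 2 * derivative h).coeff 1 = 0 := by
      rw [pow_two, mul_assoc]
      simp [Polynomial.mul_coeff_zero]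
    rw [h2, smul_eq_mul]
    push_cast
    ring
  | succ j =>
    have h2 : (X ^ 2 * derivative h).coeff (j + 1 + 1) = (derivative h).coeff j := by
      have := Polynomial.coeff_X_pow_mul (derivative h) 2 j
      simpa [show j + 2 = j + 1 + 1 by omega] using this
    rw [h2, Polynomial.coeff_derivative, smul_eq_mul]
    push_cast
    ring

lemma pyr_basic (n d : ℕ) (h : Polynomial ℝ)
    (hcoeff : ∀ i, 0 ≤ h.coeff i) (hconst : h.coeff 0 = 1)
    (hdeg : h.natDegree = d) (hdn : d + 1 ≤ n) :
    ((1 + (n : ℝ) • X) * h + (X - X ^ 2) * derivative h).natDegree = d + 1 ∧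
    (∀ i, 0 ≤ ((1 + (n : ℝ) • X) * h + (X - X ^ 2) * derivative h).coeff i) ∧
    ((1 + (n : ℝ) • X) * h + (X - X ^ 2) * derivative h).leadingCoeff
      = ((n : ℝ) - d) * h.leadingCoeff ∧
    ((1 + (n : ℝ) • X) * h + (X - X ^ 2) * derivative h).coeff 0 = 1 := by
  set p := (1 + (n : ℝ) • X) * h + (X - X ^ 2) * derivative h with hp
  have hne : h ≠ 0 := fun hh => by simp [hh] at hconst
  have hld : 0 < h.leadingCoeff :=
    lt_of_le_of_ne (hcoeff _) (Ne.symm (Polynomial.leadingCoeff_ne_zero.2 hne))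
  -- upper bound on degree
  have hub : p.natDegree ≤ d + 1 := by
    apply le_trans (Polynomial.natDegree_add_le _ _)
    apply max_le
    · apply Polynomial.natDegree_mul_le.trans
      have h1 : (1 + (n : ℝ) • X : Polynomial ℝ).natDegree ≤ 1 := by
        apply le_trans (Polynomial.natDegree_add_le _ _)
        apply max_le
        · simp
        · rw [Polynomial.smul_eq_C_mul]
          apply Polynomial.natDegree_mul_le.trans
          simp
      omega
    · by_cases hdz : derivative h = 0
      · simp [hdz]
      · have hd1 : 1 ≤ d := by
          by_contra hd0
          have : d = 0 := by omega
          obtain ⟨a, ha⟩ := Polynomial.natDegree_eq_zero.1 (hdeg.trans this)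
          rw [← ha] at hdz
          simp at hdz
        apply Polynomial.natDegree_mul_le.trans
        have h2 : (X - X ^ 2 : Polynomial ℝ).natDegree ≤ 2 := by
          apply le_trans (Polynomial.natDegree_sub_le _ _)
          simp [Polynomial.natDegree_X_pow]
        have h3 : (derivative h).natDegree ≤ d - 1 := hdeg ▸ Polynomial.natDegree_derivative_le h
        omega
  have htop : p.coeff (d + 1) = ((n : ℝ) - d) * h.leadingCoeff := by
    rw [hp, pyr_coeff_succ n h d]
    rw [Polynomial.coeff_eq_zero_of_natDegree_lt (by omega : h.natDegree < d + 1)]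
    rw [show h.coeff d = h.leadingCoeff by rw [Polynomial.leadingCoeff, hdeg]]
    ring
  have hnd : ((n : ℝ) - d) ≠ 0 := by
    have : (d : ℝ) < n := by exact_mod_cast (by omega : d < n)
    linarith
  have htopne : p.coeff (d + 1) ≠ 0 := by
    rw [htop]; exact mul_ne_zero hnd (ne_of_gt hld)
  have hdegp : p.natDegree = d + 1 :=
    le_antisymm hub (Polynomial.le_natDegree_of_ne_zero htopne)
  refine ⟨hdegp, ?_, ?_, ?_⟩
  · intro i
    cases i with
    | zero => rw [hp, pyr_coeff_zero, hconst]; norm_num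
    | succ i =>
      rw [hp, pyr_coeff_succ]
      by_cases hi : i ≤ d
      · have h1 : (0:ℝ) ≤ (n : ℝ) - i := by
          have : (i : ℝ) ≤ n := by exact_mod_cast (by omega : i ≤ n)
          linarith
        have h2 : (0:ℝ) ≤ (i : ℝ) + 2 := by positivity
        exact add_nonneg (mul_nonneg h2 (hcoeff _)) (mul_nonneg h1 (hcoeff _))
      · have h0 : h.coeff i = 0 :=
          Polynomial.coeff_eq_zero_of_natDegree_lt (by omega)
        rw [h0, mul_zero, add_zero]
        exact mul_nonneg (by positivity) (hcoeff _)
  · rw [Polynomial.leadingCoeff, hdegp, htop]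
  · rw [hp, pyr_coeff_zero, hconst]


lemma h_factor (h : Polynomial ℝ) (hne : h ≠ 0)
    (hroots : Multiset.card h.roots = h.natDegree) :
    h = C h.leadingCoeff * ∏ a ∈ h.roots.toFinset, (X - C a) ^ (rootMultiplicity a h) := by
  classical
  have h1 := Polynomial.C_leadingCoeff_mul_prod_multiset_X_sub_C (p := h) hroots
  rw [Finset.prod_multiset_map_count] at h1
  conv_lhs => rw [← h1]
  congr 1
  apply Finset.prod_congr rfl
  intro a _
  rw [Polynomial.count_roots]

lemma eval_r_at_root (n : ℕ) (h r : Polynomial ℝ) (hne : h ≠ 0)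
    (hroots : Multiset.card h.roots = h.natDegree)
    (a : ℝ) (ha : a ∈ h.roots.toFinset)
    (hpr : (1 + (n : ℝ) • X) * h + (X - X ^ 2) * derivative h
      = (∏ b ∈ h.roots.toFinset, (X - C b) ^ (rootMultiplicity b h - 1)) * r) :
    r.eval a = (a - a ^ 2) * (rootMultiplicity a h : ℝ) * h.leadingCoeff
      * ∏ b ∈ h.roots.toFinset.erase a, (a - b) := by
  classical
  set S := h.roots.toFinset with hS
  set m : ℝ → ℕ := fun b => rootMultiplicity b h with hmdef
  have hm1 : ∀ b ∈ S, 1 ≤ m b := by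
    intro b hb
    rw [hS, Multiset.mem_toFinset] at hb
    exact (Polynomial.rootMultiplicity_pos hne).2 (Polynomial.isRoot_of_mem_roots hb)
  set e := m a - 1 with he
  have hme : m a = e + 1 := by have := hm1 a ha; omega
  set q := h /ₘ (X - C a) ^ (m a) with hq
  have hfq : (X - C a) ^ (m a) * q = h :=
    Polynomial.pow_mul_divByMonic_rootMultiplicity_eq h a
  have hd' : derivative h = (X - C a) ^ e *
      (C ((m a : ℝ)) * q + (X - C a) * derivative q) := by
    conv_lhs => rw [← hfq]
    rw [derivative_mul, derivative_pow]
    rw [hme]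
    simp only [derivative_sub, derivative_X, derivative_C, sub_zero, mul_one,
      Nat.add_sub_cancel, Nat.cast_add, Nat.cast_one]
    ring
  set B := (1 + (n : ℝ) • X) * ((X - C a) * q)
      + (X - X ^ 2) * (C ((m a : ℝ)) * q + (X - C a) * derivative q) with hB
  have hpB : (1 + (n : ℝ) • X) * h + (X - X ^ 2) * derivative h
      = (X - C a) ^ e * B := by
    conv_lhs => rw [hd']
    conv_lhs => rw [← hfq]
    rw [hB, hme]
    ring
  set V := ∏ b ∈ S.erase a, (X - C b) ^ (m b - 1) with hV
  have hUV : (∏ b ∈ S, (X - C b) ^ (m b - 1)) = (X - C a) ^ e * V := by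
    rw [hV, he]
    exact (Finset.mul_prod_erase S _ ha).symm
  have hcancel : V * r = B := by
    have h2 : (X - C a) ^ e * (V * r) = (X - C a) ^ e * B := by
      rw [← mul_assoc, ← hUV, ← hpr, hpB]
    exact mul_left_cancel₀ (pow_ne_zero _ (Polynomial.X_sub_C_ne_zero a)) h2
  have hqfact : q = C h.leadingCoeff * ∏ b ∈ S.erase a, (X - C b) ^ (m b) := by
    have h3 : h = (X - C a) ^ (m a) * (C h.leadingCoeff * ∏ b ∈ S.erase a, (X - C b) ^ (m b)) := by
      conv_lhs => rw [h_factor h hne hroots]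
      rw [← Finset.mul_prod_erase S (fun b => (X - C b) ^ (m b)) ha]
      ring
    have h4 : (X - C a) ^ (m a) * q
        = (X - C a) ^ (m a) * (C h.leadingCoeff * ∏ b ∈ S.erase a, (X - C b) ^ (m b)) := by
      rw [hfq, ← h3]
    exact mul_left_cancel₀ (pow_ne_zero _ (Polynomial.X_sub_C_ne_zero a)) h4
  -- evaluations
  have evq : q.eval a = h.leadingCoeff * ∏ b ∈ S.erase a, (a - b) ^ (m b) := by
    rw [hqfact]
    rw [Polynomial.eval_mul, Polynomial.eval_C, Polynomial.eval_prod]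
    congr 1
    apply Finset.prod_congr rfl
    intro b _
    rw [Polynomial.eval_pow, Polynomial.eval_sub, Polynomial.eval_C, Polynomial.eval_X]
  have evV : V.eval a = ∏ b ∈ S.erase a, (a - b) ^ (m b - 1) := by
    rw [hV, Polynomial.eval_prod]
    apply Finset.prod_congr rfl
    intro b _
    rw [Polynomial.eval_pow, Polynomial.eval_sub, Polynomial.eval_C, Polynomial.eval_X]
  have evB : B.eval a = (a - a ^ 2) * ((m a : ℝ) * q.eval a) := by
    rw [hB]
    simp only [Polynomial.eval_add, Polynomial.eval_mul, Polynomial.eval_sub,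
      Polynomial.eval_smul, Polynomial.eval_one, Polynomial.eval_X, Polynomial.eval_pow,
      Polynomial.eval_C, smul_eq_mul]
    ring
  have prodsplit : ∏ b ∈ S.erase a, (a - b) ^ (m b)
      = (∏ b ∈ S.erase a, (a - b) ^ (m b - 1)) * ∏ b ∈ S.erase a, (a - b) := by
    rw [← Finset.prod_mul_distrib]
    apply Finset.prod_congr rfl
    intro b hb
    have hb1 : 1 ≤ m b := hm1 b (Finset.mem_of_mem_erase hb)
    rw [← pow_succ]
    congr 1
    omega
  have hWne : (∏ b ∈ S.erase a, (a - b) ^ (m b - 1)) ≠ 0 := by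
    apply Finset.prod_ne_zero_iff.2
    intro b hb
    have : b ≠ a := Finset.ne_of_mem_erase hb
    exact pow_ne_zero _ (sub_ne_zero.2 (Ne.symm this))
  have hev : V.eval a * r.eval a = B.eval a := by
    rw [← Polynomial.eval_mul, hcancel]
  rw [evV, evB, evq, prodsplit] at hev
  have hgoal : r.eval a * (∏ b ∈ S.erase a, (a - b) ^ (m b - 1))
      = ((a - a ^ 2) * (m a : ℝ) * h.leadingCoeff * ∏ b ∈ S.erase a, (a - b))
        * (∏ b ∈ S.erase a, (a - b) ^ (m b - 1)) := by
    rw [mul_comm (r.eval a)]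
    rw [hev]
    ring
  exact mul_right_cancel₀ hWne hgoal

lemma card_finset_sum {α β : Type*} (S : Finset α) (f : α → Multiset β) :
    Multiset.card (∑ a ∈ S, f a) = ∑ a ∈ S, Multiset.card (f a) := by
  rw [Finset.sum, Finset.sum]
  induction S.val using Multiset.induction with
  | empty => simp
  | cons a s ih => simp [ih]

lemma pyr_counts (n d : ℕ) (h : Polynomial ℝ)
    (hcoeff : ∀ i, 0 ≤ h.coeff i) (hconst : h.coeff 0 = 1)
    (hdeg : h.natDegree = d) (hdn : d + 1 ≤ n)
    (hroots : Multiset.card h.roots = d) :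
    Multiset.card ((1 + (n : ℝ) • X) * h + (X - X ^ 2) * derivative h).roots = d + 1 ∧
    ∀ t : ℝ,
      Multiset.countP (fun x => t ≤ x) h.roots
        ≤ Multiset.countP (fun x => t ≤ x)
            ((1 + (n : ℝ) • X) * h + (X - X ^ 2) * derivative h).roots ∧
      Multiset.countP (fun x => t ≤ x)
          ((1 + (n : ℝ) • X) * h + (X - X ^ 2) * derivative h).roots
        ≤ Multiset.countP (fun x => t ≤ x) h.roots + 1 := by
  classical
  obtain ⟨pdeg, pcoeff, plc, p0⟩ := pyr_basic n d h hcoeff hconst hdeg hdn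
  set p := (1 + (n : ℝ) • X) * h + (X - X ^ 2) * derivative h with hpdef
  have hne : h ≠ 0 := fun hh => by simp [hh] at hconst
  have pne : p ≠ 0 := fun hh => by rw [hh] at p0; simp at p0
  have hC0 : 0 < h.leadingCoeff :=
    lt_of_le_of_ne (hcoeff _) (Ne.symm (Polynomial.leadingCoeff_ne_zero.2 hne))
  have hndpos : (0:ℝ) < (n : ℝ) - d := by
    have : (d : ℝ) < n := by exact_mod_cast (by omega : d < n)
    linarith
  by_cases hd0 : d = 0
  · -- degree zero case
    subst hd0
    have hroots0 : h.roots = 0 := Multiset.card_eq_zero.1 hroots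
    have hpd1 : p.natDegree = 1 := pdeg
    have hx0 : p.IsRoot (-(p.coeff 0) / p.coeff 1) := by
      have hc1 : p.coeff 1 ≠ 0 := by
        have : p.coeff 1 = p.leadingCoeff := by rw [Polynomial.leadingCoeff, hpd1]
        rw [this, plc]
        exact ne_of_gt (by positivity)
      have hrep := Polynomial.eq_X_add_C_of_degree_le_one
        (p := p) (by exact_mod_cast Polynomial.natDegree_le_iff_degree_le.1 (le_of_eq hpd1))
      rw [Polynomial.IsRoot.def]
      conv_lhs => rw [hrep]
      simp only [Polynomial.eval_add, Polynomial.eval_mul, Polynomial.eval_C, Polynomial.eval_X]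
      rw [← hrep]
      field_simp
      ring
    have hmem : (-(p.coeff 0) / p.coeff 1) ∈ p.roots := by
      rw [Polynomial.mem_roots pne]
      exact hx0
    constructor
    · have hle : Multiset.card p.roots ≤ 1 := hpd1 ▸ p.card_roots'
      have hge : 1 ≤ Multiset.card p.roots := by
        rw [Nat.one_le_iff_ne_zero]
        intro hz
        rw [Multiset.card_eq_zero] at hz
        rw [hz] at hmem
        simp at hmem
      omega
    · intro t
      constructor
      · rw [hroots0]; simp
      · have h1 : Multiset.countP (fun x => t ≤ x) p.roots ≤ Multiset.card p.roots :=
          Multiset.countP_le_card _ _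
        have hle : Multiset.card p.roots ≤ 1 := hpd1 ▸ p.card_roots'
        rw [hroots0]
        simp only [Multiset.countP_zero]
        omega
  · -- main case: d ≥ 1
    have hd1 : 1 ≤ d := by omega
    set S : Finset ℝ := h.roots.toFinset with hS
    set k := S.card with hk
    set m : ℝ → ℕ := fun a => rootMultiplicity a h with hmdef
    have hm1 : ∀ a ∈ S, 1 ≤ m a := by
      intro a ha
      rw [hS, Multiset.mem_toFinset] at ha
      exact (Polynomial.rootMultiplicity_pos hne).2 (Polynomial.isRoot_of_mem_roots ha)
    have hsum : ∑ a ∈ S, m a = d := by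
      have := Multiset.toFinset_sum_count_eq h.roots
      rw [hroots] at this
      rw [← this]
      apply Finset.sum_congr rfl
      intro a _
      rw [hmdef, Polynomial.count_roots]
    have hkd : k ≤ d := by rw [hk, hS, ← hroots]; exact Multiset.toFinset_card_le _
    have hk1 : 1 ≤ k := by
      rw [hk, hS]
      have : h.roots ≠ 0 := by
        intro hz; rw [hz] at hroots; simp at hroots; omega
      obtain ⟨a, ha⟩ := Multiset.exists_mem_of_ne_zero this
      have : a ∈ h.roots.toFinset := Multiset.mem_toFinset.2 ha
      exact Finset.card_pos.2 ⟨a, this⟩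
    have hSneg : ∀ a ∈ S, a < 0 := by
      intro a ha
      rw [hS, Multiset.mem_toFinset] at ha
      exact roots_neg h hcoeff (by rw [hconst]; norm_num) a ha
    -- U and divisibility
    set U : Polynomial ℝ := ∏ a ∈ S, (X - C a) ^ (m a - 1) with hU
    have hUmonic : U.Monic :=
      Polynomial.monic_prod_of_monic _ _ (fun a _ => (Polynomial.monic_X_sub_C a).pow _)
    have hUne : U ≠ 0 := hUmonic.ne_zero
    have hsum' : ∑ a ∈ S, (m a - 1) = d - k := by
      have h1 : ∑ a ∈ S, (m a - 1) + ∑ a ∈ S, 1 = ∑ a ∈ S, m a := by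
        rw [← Finset.sum_add_distrib]
        apply Finset.sum_congr rfl
        intro a ha
        have := hm1 a ha
        omega
      rw [Finset.sum_const, smul_eq_mul, mul_one, hsum] at h1
      omega
    have hUdeg : U.natDegree = d - k := by
      rw [hU, Polynomial.natDegree_prod _ _
        (fun a _ => pow_ne_zero _ (Polynomial.X_sub_C_ne_zero a))]
      rw [← hsum']
      apply Finset.sum_congr rfl
      intro a _
      rw [Polynomial.natDegree_pow, Polynomial.natDegree_X_sub_C, mul_one]
    have hdvd : ∀ a ∈ S, (X - C a) ^ (m a - 1) ∣ p := by
      intro a ha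
      have h1 : (X - C a) ^ (m a) ∣ h := Polynomial.pow_rootMultiplicity_dvd h a
      have h2 : (X - C a) ^ (m a - 1) ∣ h := dvd_trans (pow_dvd_pow _ (by omega)) h1
      have h3 : (X - C a) ^ (m a - 1) ∣ derivative h := by
        obtain ⟨q, hq⟩ := h1
        rw [hq, derivative_mul, derivative_pow]
        apply dvd_add
        · apply Dvd.dvd.mul_right
          apply Dvd.dvd.mul_right
          apply Dvd.dvd.mul_left
          exact dvd_rfl
        · apply Dvd.dvd.mul_right
          exact dvd_trans (pow_dvd_pow _ (by omega)) dvd_rfl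
      rw [hpdef]
      exact dvd_add (Dvd.dvd.mul_left h2 _) (Dvd.dvd.mul_left h3 _)
    have hUdvdp : U ∣ p := by
      rw [hU]
      apply Finset.prod_dvd_of_coprime _ hdvd
      intro a ha b hb hab
      have : IsCoprime (X - C a : Polynomial ℝ) (X - C b) := by
        apply Polynomial.isCoprime_X_sub_C_of_isUnit_sub
        exact IsUnit.of_mul_eq_one (a - b)⁻¹
          (mul_inv_cancel₀ (sub_ne_zero.2 hab))
      exact IsCoprime.pow this
    obtain ⟨r, hpr⟩ := hUdvdp
    have hrne : r ≠ 0 := fun hh => pne (by rw [hpr, hh, mul_zero])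
    have hrdeg : r.natDegree = k + 1 := by
      have := Polynomial.natDegree_mul hUne hrne
      rw [← hpr, pdeg, hUdeg] at this
      omega
    have hrlc : 0 < r.leadingCoeff := by
      have := Polynomial.leadingCoeff_mul U r
      rw [← hpr, plc, hUmonic.leadingCoeff, one_mul] at this
      rw [← this]
      exact mul_pos hndpos hC0
    -- enumeration of S in increasing order
    have hkcard : S.card = k := hk.symm
    set σ := S.orderIsoOfFin hkcard with hσ
    set sfun : ℕ → ℝ := fun j => if hj : j < k then (σ ⟨j, hj⟩ : ℝ) else 0 with hsfun
    have hsmem : ∀ j, j < k → sfun j ∈ S := by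
      intro j hj
      rw [hsfun]
      simp only [hj, dif_pos]
      exact (σ ⟨j, hj⟩).2
    have hsmono : ∀ i j, i < j → j < k → sfun i < sfun j := by
      intro i j hij hj
      have hi : i < k := lt_trans hij hj
      rw [hsfun]
      simp only [hi, hj, dif_pos]
      exact Subtype.coe_lt_coe.2 (σ.lt_iff_lt.2 (Fin.mk_lt_mk.2 hij))
    have hssurj : ∀ a ∈ S, ∃ j, j < k ∧ sfun j = a := by
      intro a ha
      obtain ⟨i, hi⟩ := σ.surjective ⟨a, ha⟩
      refine ⟨i.1, i.2, ?_⟩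
      rw [hsfun]
      simp only [i.2, dif_pos, Fin.eta]
      rw [hi]
    have hSimage : S = (Finset.range k).image sfun := by
      apply Finset.ext; intro a
      simp only [Finset.mem_image, Finset.mem_range]
      constructor
      · intro ha; obtain ⟨j, hj, he⟩ := hssurj a ha; exact ⟨j, hj, he⟩
      · rintro ⟨j, hj, rfl⟩; exact hsmem j hj
    have hsinj : Set.InjOn sfun (Finset.range k) := by
      intro i hi j hj hij
      simp only [Finset.coe_range, Set.mem_Iio] at hi hj
      by_contra hne'
      rcases lt_or_gt_of_ne hne' with hlt | hlt
      · exact absurd hij (ne_of_lt (hsmono _ _ hlt hj))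
      · exact absurd hij.symm (ne_of_lt (hsmono _ _ hlt hi))
    have hfiltercard : ∀ j, j < k → (S.filter (fun b => sfun j < b)).card = k - 1 - j := by
      intro j hj
      rw [hSimage, Finset.filter_image]
      rw [Finset.card_image_of_injOn (hsinj.mono (by
        intro x hx
        simp only [Finset.coe_filter, Set.mem_setOf_eq] at hx
        simp only [Finset.coe_range, Set.mem_Iio]
        exact List.mem_range.1 (by simpa using hx.1)))]
      have heq : (Finset.range k).filter (fun i => sfun j < sfun i) = Finset.Ioo j k := by
        apply Finset.ext; intro i
        simp only [Finset.mem_filter, Finset.mem_range, Finset.mem_Ioo]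
        constructor
        · rintro ⟨hik, hlt⟩
          refine ⟨?_, hik⟩
          by_contra hji
          push_neg at hji
          rcases eq_or_lt_of_le hji with rfl | hlt2
          · exact lt_irrefl _ hlt
          · exact absurd hlt (not_lt.2 (le_of_lt (hsmono _ _ hlt2 hj)))
        · rintro ⟨hji, hik⟩
          exact ⟨hik, hsmono _ _ hji hik⟩
      rw [heq, Nat.card_Ioo]
      omega
    have hprr : (1 + (n : ℝ) • X) * h + (X - X ^ 2) * derivative h
        = (∏ b ∈ h.roots.toFinset, (X - C b) ^ (rootMultiplicity b h - 1)) * r := hpr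
    have hsign : ∀ j, j < k → r.eval (sfun j) * (-1 : ℝ) ^ (k - 1 - j) < 0 := by
      intro j hj
      set a := sfun j with hadef
      have haS : a ∈ S := hsmem j hj
      have hev := eval_r_at_root n h r hne (by rw [hdeg]; exact hroots) a
        (by rw [hS] at haS; exact haS) hprr
      rw [← hS] at hev
      have hD := prod_erase_sign S a
      have hfc : (S.filter (fun b => a < b)).card = k - 1 - j := hfiltercard j hj
      rw [hfc] at hD
      have ha0 : a < 0 := hSneg a haS
      have h1 : a - a ^ 2 < 0 := by nlinarith
      have h2 : (0:ℝ) < (rootMultiplicity a h : ℝ) := by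
        have h3 := hm1 a haS
        have h4 : 0 < rootMultiplicity a h := by
          simp only [hmdef] at h3; omega
        exact_mod_cast h4
      have key : (a - a ^ 2) * (rootMultiplicity a h : ℝ) * h.leadingCoeff
            * (∏ b ∈ S.erase a, (a - b)) * (-1 : ℝ) ^ (k - 1 - j)
          = (a - a ^ 2) * ((rootMultiplicity a h : ℝ) * (h.leadingCoeff
            * ((∏ b ∈ S.erase a, (a - b)) * (-1 : ℝ) ^ (k - 1 - j)))) := by ring
      rw [hev, key]
      exact mul_neg_of_neg_of_pos h1 (mul_pos h2 (mul_pos hC0 hD))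
    -- construction of the k+1 roots of r
    have hex : ∀ j : ℕ, ∃ x : ℝ, (j ≤ k → r.eval x = 0)
        ∧ (j < k → x < sfun j) ∧ (0 < j → j ≤ k → sfun (j - 1) < x) := by
      intro j
      by_cases hjk : j ≤ k
      swap
      · exact ⟨0, fun hc => absurd hc hjk, fun hc => absurd (le_of_lt hc) hjk,
          fun _ hc => absurd hc hjk⟩
      rcases Nat.eq_zero_or_pos j with rfl | hj0
      · have hs0 := hsign 0 (by omega)
        obtain ⟨xm, hx1, hx2⟩ := exists_neg_far r (by rw [hrdeg]; omega) hrlc (sfun 0)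
        rw [hrdeg] at hx2
        set E := (-1 : ℝ) ^ (k - 1 - 0) with hE
        have hE1 : (-1 : ℝ) ^ (k + 1) = E := by
          rw [hE, show k + 1 = (k - 1 - 0) + 2 by omega, pow_add]
          norm_num
        rw [hE1] at hx2
        have hEE : E * E = 1 := by
          rw [hE, ← pow_add]
          exact Even.neg_one_pow ⟨k - 1 - 0, rfl⟩
        have hprod : r.eval xm * r.eval (sfun 0) < 0 := by
          have h3 : 0 < (E * r.eval xm) * (-(r.eval (sfun 0) * E)) :=
            mul_pos hx2 (by linarith)
          have h4 : (E * r.eval xm) * (-(r.eval (sfun 0) * E))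
              = -(r.eval xm * r.eval (sfun 0)) * (E * E) := by ring
          rw [h4, hEE, mul_one] at h3
          linarith
        obtain ⟨c, hc1, hc2, hc3⟩ := exists_root_between r hx1 hprod
        exact ⟨c, fun _ => hc3, fun _ => hc2, fun hc _ => absurd hc (lt_irrefl 0)⟩
      rcases eq_or_lt_of_le hjk with heq | hjk'
      · have hsk := hsign (j - 1) (by omega)
        have hz : k - 1 - (j - 1) = 0 := by omega
        rw [hz, pow_zero, mul_one] at hsk
        obtain ⟨xp, hx1, hx2⟩ := exists_pos_far r (by rw [hrdeg]; omega) hrlc (sfun (j - 1))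
        have hprod : r.eval (sfun (j - 1)) * r.eval xp < 0 :=
          mul_neg_of_neg_of_pos hsk hx2
        obtain ⟨c, hc1, hc2, hc3⟩ := exists_root_between r hx1 hprod
        exact ⟨c, fun _ => hc3, fun hc => absurd hc (by omega), fun _ _ => hc1⟩
      · have hs1 := hsign (j - 1) (by omega)
        have hs2 := hsign j hjk'
        set E := (-1 : ℝ) ^ (k - 1 - j) with hE
        have he1 : (-1 : ℝ) ^ (k - 1 - (j - 1)) = -E := by
          rw [hE, show k - 1 - (j - 1) = (k - 1 - j) + 1 by omega, pow_succ]
          ring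
        rw [he1] at hs1
        have hEE : E * E = 1 := by
          rw [hE, ← pow_add]; exact Even.neg_one_pow ⟨_, rfl⟩
        have hprod : r.eval (sfun (j - 1)) * r.eval (sfun j) < 0 := by
          have l0 : r.eval (sfun (j - 1)) * -E = -(r.eval (sfun (j - 1)) * E) := by ring
          rw [l0] at hs1
          have l1 : 0 < r.eval (sfun (j - 1)) * E := by linarith
          have h3 : 0 < (r.eval (sfun (j - 1)) * E) * (-(r.eval (sfun j) * E)) :=
            mul_pos l1 (by linarith)
          have h4 : (r.eval (sfun (j - 1)) * E) * (-(r.eval (sfun j) * E))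
              = -(r.eval (sfun (j - 1)) * r.eval (sfun j)) * (E * E) := by ring
          rw [h4, hEE, mul_one] at h3
          linarith
        have hlt : sfun (j - 1) < sfun j := hsmono _ _ (by omega) hjk'
        obtain ⟨c, hc1, hc2, hc3⟩ := exists_root_between r hlt hprod
        exact ⟨c, fun _ => hc3, fun _ => hc2, fun _ _ => hc1⟩
    choose β hβ0 hβ1 hβ2 using hex
    have hchain : ∀ j, j < k → β j < β (j + 1) := by
      intro j hj
      have h1 : β j < sfun j := hβ1 j hj
      have h2 : sfun (j + 1 - 1) < β (j + 1) := hβ2 (j + 1) (by omega) (by omega)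
      simp only [Nat.add_sub_cancel] at h2
      exact lt_trans h1 h2
    have hβmono : ∀ i j, i < j → j ≤ k → β i < β j := by
      intro i j hij hjk
      induction j with
      | zero => omega
      | succ j ih =>
        rcases Nat.lt_succ_iff_lt_or_eq.1 hij with hlt | heq
        · exact lt_trans (ih hlt (by omega)) (hchain j (by omega))
        · rw [heq]; exact hchain j (by omega)
    have hβinj : Set.InjOn β (Finset.range (k + 1)) := by
      intro i hi j hj hij
      simp only [Finset.coe_range, Set.mem_Iio] at hi hj
      by_contra hne'
      rcases lt_or_gt_of_ne hne' with hlt | hlt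
      · exact absurd hij (ne_of_lt (hβmono _ _ hlt (by omega)))
      · exact absurd hij.symm (ne_of_lt (hβmono _ _ hlt (by omega)))
    set Rset := (Finset.range (k + 1)).image β with hRset
    have hRcard : Rset.card = k + 1 := by
      rw [hRset, Finset.card_image_of_injOn hβinj, Finset.card_range]
    have hRroots : Rset.val ≤ r.roots := by
      rw [Multiset.le_iff_count]
      intro x
      by_cases hx : x ∈ Rset
      · have hcount1 : Rset.val.count x = 1 := Multiset.count_eq_one_of_mem Rset.nodup hx
        rw [hcount1, Polynomial.count_roots]
        rw [hRset] at hx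
        obtain ⟨j, hj, rfl⟩ := Finset.mem_image.1 hx
        have hroot : r.IsRoot (β j) := hβ0 j (by
          have := Finset.mem_range.1 hj; omega)
        exact (Polynomial.rootMultiplicity_pos hrne).2 hroot
      · have hz : Rset.val.count x = 0 := by
          rw [Multiset.count_eq_zero]
          exact fun hc => hx (Finset.mem_def.2 hc)
        rw [hz]
        exact Nat.zero_le _
    have hReq : r.roots = Rset.val := by
      symm
      apply Multiset.eq_of_le_of_card_le hRroots
      rw [show Multiset.card Rset.val = Rset.card from rfl, hRcard, ← hrdeg]
      exact r.card_roots'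
    have hrootsU : U.roots = ∑ a ∈ S, (m a - 1) • ({a} : Multiset ℝ) := by
      rw [hU, Polynomial.roots_prod _ S (by rw [← hU]; exact hUne)]
      rw [Finset.sum, Multiset.bind, Multiset.join]
      congr 1
      apply Multiset.map_congr rfl
      intro a _
      rw [Polynomial.roots_pow, Polynomial.roots_X_sub_C]
    have hcardU : Multiset.card U.roots = d - k := by
      rw [hrootsU, card_finset_sum, ← hsum']
      apply Finset.sum_congr rfl
      intro a _
      rw [Multiset.card_nsmul, Multiset.card_singleton, mul_one]
    have hrootsh : h.roots = U.roots + S.val := by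
      have e1 : U.roots + S.val = ∑ a ∈ S, (m a) • ({a} : Multiset ℝ) := by
        rw [hrootsU,
          show S.val = ∑ a ∈ S, ({a} : Multiset ℝ) from (Finset.sum_multiset_singleton S).symm,
          ← Finset.sum_add_distrib]
        apply Finset.sum_congr rfl
        intro a ha
        have h1 : m a = (m a - 1) + 1 := by have := hm1 a ha; omega
        conv_rhs => rw [h1]
        rw [succ_nsmul]
      have e2 : h.roots = ∑ a ∈ S, (m a) • ({a} : Multiset ℝ) := by
        conv_lhs => rw [← Multiset.toFinset_sum_count_nsmul_eq h.roots]
        apply Finset.sum_congr hS.symm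
        intro a _
        rw [Polynomial.count_roots]
      rw [e2, e1]
    have hrootsp : p.roots = U.roots + r.roots := by
      rw [hpr, Polynomial.roots_mul (by rw [← hpr]; exact pne)]
    constructor
    · rw [hrootsp, Multiset.card_add, hcardU, hReq]
      rw [show Multiset.card Rset.val = Rset.card from rfl, hRcard]
      omega
    · intro t
      rw [hrootsp, hrootsh, Multiset.countP_add, Multiset.countP_add, hReq]
      have hcS : Multiset.countP (fun x => t ≤ x) S.val
          = ((Finset.range k).filter (fun j => t ≤ sfun j)).card := by
        rw [Multiset.countP_eq_card_filter]
        rw [show Multiset.filter (fun x => t ≤ x) S.val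
            = (S.filter (fun x => t ≤ x)).val from rfl]
        rw [show Multiset.card (S.filter (fun x => t ≤ x)).val
            = (S.filter fun x => t ≤ x).card from rfl]
        rw [hSimage, Finset.filter_image, Finset.card_image_of_injOn (hsinj.mono (by
          intro x hx
          simp only [Finset.coe_filter, Set.mem_setOf_eq] at hx
          simp only [Finset.coe_range, Set.mem_Iio]
          exact Finset.mem_range.1 (by simpa using hx.1)))]
      have hcR : Multiset.countP (fun x => t ≤ x) Rset.val
          = ((Finset.range (k + 1)).filter (fun j => t ≤ β j)).card := by
        rw [Multiset.countP_eq_card_filter]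
        rw [show Multiset.filter (fun x => t ≤ x) Rset.val
            = (Rset.filter (fun x => t ≤ x)).val from rfl]
        rw [show Multiset.card (Rset.filter (fun x => t ≤ x)).val
            = (Rset.filter fun x => t ≤ x).card from rfl]
        rw [hRset, Finset.filter_image, Finset.card_image_of_injOn (hβinj.mono (by
          intro x hx
          simp only [Finset.coe_filter, Set.mem_setOf_eq] at hx
          simp only [Finset.coe_range, Set.mem_Iio]
          exact Finset.mem_range.1 (by simpa using hx.1)))]
      have hclaim1 : ((Finset.range k).filter (fun j => t ≤ sfun j)).card
          ≤ ((Finset.range (k + 1)).filter (fun j => t ≤ β j)).card := by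
        have hsub : ((Finset.range k).filter (fun j => t ≤ sfun j)).image (· + 1)
            ⊆ (Finset.range (k + 1)).filter (fun j => t ≤ β j) := by
          intro x hx
          obtain ⟨j, hj, rfl⟩ := Finset.mem_image.1 hx
          simp only [Finset.mem_filter, Finset.mem_range] at hj ⊢
          refine ⟨by omega, ?_⟩
          have h2 : sfun (j + 1 - 1) < β (j + 1) := hβ2 (j + 1) (by omega) (by omega)
          simp only [Nat.add_sub_cancel] at h2
          exact le_of_lt (lt_of_le_of_lt hj.2 h2)
        calc ((Finset.range k).filter (fun j => t ≤ sfun j)).card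
            = (((Finset.range k).filter (fun j => t ≤ sfun j)).image (· + 1)).card :=
              (Finset.card_image_of_injOn (fun a _ b _ hab => by omega)).symm
          _ ≤ _ := Finset.card_le_card hsub
      have hclaim2 : ((Finset.range (k + 1)).filter (fun j => t ≤ β j)).card
          ≤ ((Finset.range k).filter (fun j => t ≤ sfun j)).card + 1 := by
        have hsub : (Finset.range (k + 1)).filter (fun j => t ≤ β j)
            ⊆ insert k ((Finset.range k).filter (fun j => t ≤ sfun j)) := by
          intro j hj
          simp only [Finset.mem_filter, Finset.mem_range] at hj
          rcases eq_or_lt_of_le (Nat.lt_succ_iff.1 hj.1) with heq | hlt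
          · rw [Finset.mem_insert]; left; exact heq
          · rw [Finset.mem_insert]; right
            simp only [Finset.mem_filter, Finset.mem_range]
            exact ⟨hlt, le_of_lt (lt_of_le_of_lt hj.2 (hβ1 j hlt))⟩
        exact le_trans (Finset.card_le_card hsub) (Finset.card_insert_le _ _)
      rw [hcS, hcR]
      omega

lemma rootsDesc_sorted_s13 (f : Polynomial ℝ) :
    (rootsDesc f).Pairwise (fun a b : ℝ => b ≤ a) := by
  rw [rootsDesc, List.pairwise_reverse]
  exact Multiset.pairwise_sort f.roots (· ≤ ·)

lemma length_rootsDesc (f : Polynomial ℝ) :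
    (rootsDesc f).length = Multiset.card f.roots := by
  rw [rootsDesc, List.length_reverse, Multiset.length_sort]

lemma countP_rootsDesc (f : Polynomial ℝ) (t : ℝ) :
    (rootsDesc f).countP (fun x => decide (t ≤ x))
      = Multiset.countP (fun x => t ≤ x) f.roots := by
  rw [rootsDesc, List.countP_reverse]
  have : (Multiset.sort f.roots (· ≤ ·) : Multiset ℝ) = f.roots :=
    Multiset.sort_eq _ _
  conv_rhs => rw [← this]
  exact (Multiset.coe_countP _ _).symm

lemma sorted_le_getD_iff (L : List ℝ) (hL : L.Pairwise (fun a b : ℝ => b ≤ a))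
    (t : ℝ) (i : ℕ) (hi : i < L.length) :
    t ≤ L.getD i 0 ↔ i < L.countP (fun x => decide (t ≤ x)) := by
  induction L generalizing i with
  | nil => simp at hi
  | cons a tl ih =>
    have ha : ∀ b ∈ tl, b ≤ a := fun b hb => (List.pairwise_cons.1 hL).1 b hb
    have htl : tl.Pairwise (fun a b : ℝ => b ≤ a) := (List.pairwise_cons.1 hL).2
    cases i with
    | zero =>
      simp only [List.getD_cons_zero, List.countP_cons]
      constructor
      · intro h
        have : decide (t ≤ a) = true := by simpa using h
        simp [this]
      · intro h
        by_contra hta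
        have h0 : tl.countP (fun x => decide (t ≤ x)) = 0 := by
          rw [List.countP_eq_zero]
          intro x hx
          simp only [decide_eq_true_eq]
          intro htx
          exact hta (le_trans htx (ha x hx))
        simp [h0, hta] at h
    | succ i =>
      have hi' : i < tl.length := by simpa using hi
      simp only [List.getD_cons_succ, List.countP_cons]
      by_cases hta : t ≤ a
      · have h1 : (if decide (t ≤ a) = true then 1 else 0) = 1 := by simp [hta]
        rw [h1, ih htl i hi']
        omega
      · constructor
        · intro h
          exfalso
          have hmem : tl.getD i 0 ∈ tl := by
            rw [List.getD_eq_getElem tl 0 hi']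
            exact List.getElem_mem _
          exact hta (le_trans h (ha _ hmem))
        · intro h
          exfalso
          have h0 : tl.countP (fun x => decide (t ≤ x)) = 0 := by
            rw [List.countP_eq_zero]
            intro x hx
            simp only [decide_eq_true_eq]
            intro htx
            exact hta (le_trans htx (ha x hx))
          simp [h0, hta] at h

/-- The pyramid transformation: if `h` is real-rooted with nonnegative
coefficients, constant term `1` and degree `d ≤ n-1`, then
`p(x) = (1+nx)h(x) + (x-x²)h'(x)` is real-rooted of degree `d+1`, has
nonnegative coefficients, and is interlaced by `h`. -/
theorem pyramid_transform (n d : ℕ) (h : Polynomial ℝ)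
    (hcoeff : ∀ i, 0 ≤ h.coeff i) (hconst : h.coeff 0 = 1)
    (hdeg : h.natDegree = d) (hdn : d + 1 ≤ n) (hrr : RealRooted h) :
    RealRooted ((1 + (n : ℝ) • X) * h + (X - X ^ 2) * derivative h) ∧
    ((1 + (n : ℝ) • X) * h + (X - X ^ 2) * derivative h).natDegree = d + 1 ∧
    (∀ i, 0 ≤ ((1 + (n : ℝ) • X) * h + (X - X ^ 2) * derivative h).coeff i) ∧
    Interlaces h ((1 + (n : ℝ) • X) * h + (X - X ^ 2) * derivative h) := by
  have hne : h ≠ 0 := fun hh => by simp [hh] at hconst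
  have hroots : Multiset.card h.roots = d := by
    rcases hrr with hh | hc
    · exact absurd hh hne
    · rw [hc, hdeg]
  obtain ⟨pdeg, pcoeff, plc, p0⟩ := pyr_basic n d h hcoeff hconst hdeg hdn
  obtain ⟨pcard, pcount⟩ := pyr_counts n d h hcoeff hconst hdeg hdn hroots
  have prr : RealRooted ((1 + (n : ℝ) • X) * h + (X - X ^ 2) * derivative h) :=
    Or.inr (by rw [pcard, pdeg])
  refine ⟨prr, pdeg, pcoeff, ?_⟩
  right; right
  refine ⟨hrr, prr, ?_, ?_, ?_, ?_⟩
  · rw [length_rootsDesc, length_rootsDesc, hroots, pcard]; omega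
  · rw [length_rootsDesc, length_rootsDesc, hroots, pcard]
  · intro i hi
    rw [length_rootsDesc, hroots] at hi
    set t := (rootsDesc h).getD i 0 with ht
    have h1 : i < (rootsDesc h).countP (fun x => decide (t ≤ x)) := by
      rw [← sorted_le_getD_iff _ (rootsDesc_sorted_s13 h) t i
        (by rw [length_rootsDesc, hroots]; exact hi)]
    have h2 : i < (rootsDesc ((1 + (n : ℝ) • X) * h + (X - X ^ 2) * derivative h)).countP
        (fun x => decide (t ≤ x)) := by
      rw [countP_rootsDesc] at h1 ⊢
      have := (pcount t).1
      omega
    exact (sorted_le_getD_iff _ (rootsDesc_sorted_s13 _) t i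
      (by rw [length_rootsDesc, pcard]; omega)).2 h2
  · intro i hi
    rw [length_rootsDesc, pcard] at hi
    set t := (rootsDesc ((1 + (n : ℝ) • X) * h + (X - X ^ 2) * derivative h)).getD (i + 1) 0
      with ht
    have h1 : i + 1 < (rootsDesc ((1 + (n : ℝ) • X) * h
        + (X - X ^ 2) * derivative h)).countP (fun x => decide (t ≤ x)) := by
      rw [← sorted_le_getD_iff _ (rootsDesc_sorted_s13 _) t (i + 1)
        (by rw [length_rootsDesc, pcard]; exact hi)]
    have h2 : i < (rootsDesc h).countP (fun x => decide (t ≤ x)) := by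
      rw [countP_rootsDesc] at h1 ⊢
      have := (pcount t).2
      omega
    exact (sorted_le_getD_iff _ (rootsDesc_sorted_s13 h) t i
      (by rw [length_rootsDesc, hroots]; omega)).2 h2
end

section
/- A polynomial of the form f(x) = ∑_{i=0}^{⌊n/2⌋} γ_i x^i (1+x)^{n-2i} with all γ_i ≥ 0 and not all zero is real-rooted if and only if its γ-polynomial γ(x) = ∑_{i=0}^{⌊n/2⌋} γ_i x^i is real-rooted. -/
open Polynomial

/-!
Write `Γ` for the `γ`-polynomial; it has degree `d ≤ n / 2`, and
`f(x) = (1 + x)^n Γ(x / (1 + x)^2)` wherever `1 + x ≠ 0`. Because the `γ_i` are nonnegative, the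
real roots `a` of `Γ` are `≤ 0`, so if `Γ` is real-rooted then
`f = c (1 + x)^(n - 2d) ∏ₐ (x - a (1 + x)^2)`, and each quadratic factor has a real root in
`[-1, 0]` by the intermediate value theorem. Conversely, a complex root `z ≠ 0` of `Γ` equals
`x / (1 + x)^2` for a root `x` of `z (1 + x)^2 = x`; that `x` is a root of `f`, hence real, and so
is `z`.
-/

theorem realRooted_iff_splits (f : ℝ[X]) : RealRooted f ↔ f.Splits := by
  rw [RealRooted, splits_iff_card_roots, or_iff_right_of_imp]
  rintro rfl
  simp

namespace Polynomial

section

variable {R : Type*} [CommSemiring R]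

noncomputable def gammaPoly (m : ℕ) (γ : ℕ → R) : R[X] :=
  ∑ i ∈ Finset.range (m + 1), C (γ i) * X ^ i

noncomputable def gammaExpansion (n : ℕ) (γ : ℕ → R) : R[X] :=
  ∑ i ∈ Finset.range (n / 2 + 1), C (γ i) * X ^ i * (1 + X) ^ (n - 2 * i)

theorem natDegree_gammaPoly_le (m : ℕ) (γ : ℕ → R) : (gammaPoly m γ).natDegree ≤ m :=
  natDegree_sum_le_of_forall_le _ _ fun _ hi =>
    (natDegree_C_mul_X_pow_le _ _).trans (Nat.lt_succ_iff.1 (Finset.mem_range.1 hi))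

theorem aeval_gammaExpansion {L : Type*} [Field L] [Algebra R L] (n : ℕ) (γ : ℕ → R) {x : L}
    (hx : 1 + x ≠ 0) :
    aeval x (gammaExpansion n γ) = (1 + x) ^ n * aeval (x / (1 + x) ^ 2) (gammaPoly (n / 2) γ) := by
  simp only [gammaExpansion, gammaPoly, map_sum, Finset.mul_sum]
  refine Finset.sum_congr rfl fun i hi => ?_
  have hi : 2 * i ≤ n := by have := Finset.mem_range.1 hi; omega
  have hsplit : (1 + x) ^ n = (1 + x) ^ (n - 2 * i) * ((1 + x) ^ 2) ^ i := by
    rw [← pow_mul, ← pow_add, Nat.sub_add_cancel hi]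
  simp only [map_mul, map_pow, map_add, map_one, aeval_X, aeval_C, hsplit, div_pow]
  field_simp

end

theorem eval_gammaPoly_pos {m : ℕ} {γ : ℕ → ℝ} (hγ : ∀ i, 0 ≤ γ i) (hne : ∃ i ≤ m, γ i ≠ 0)
    {y : ℝ} (hy : 0 < y) : 0 < eval y (gammaPoly m γ) := by
  obtain ⟨j, hj, hγj⟩ := hne
  simp only [gammaPoly, eval_finsetSum, eval_mul, eval_C, eval_pow, eval_X]
  exact Finset.sum_pos' (fun i _ => mul_nonneg (hγ i) (pow_nonneg hy.le i))
    ⟨j, Finset.mem_range.2 (Nat.lt_succ_of_le hj), mul_pos ((hγ j).lt_of_ne' hγj) (pow_pos hy j)⟩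

theorem gammaExpansion_ne_zero {n : ℕ} {γ : ℕ → ℝ} (hγ : ∀ i, 0 ≤ γ i)
    (hne : ∃ i ≤ n / 2, γ i ≠ 0) : gammaExpansion n γ ≠ 0 := by
  intro h
  have h1 := aeval_gammaExpansion n γ (x := (1 : ℝ)) (by norm_num)
  rw [h, map_zero, coe_aeval_eq_eval] at h1
  exact (mul_pos (by positivity) (eval_gammaPoly_pos hγ hne (by norm_num))).ne h1

theorem Splits.of_natDegree_le_two_of_isRoot {K : Type*} [Field K] {f : K[X]} {a : K}
    (hf : f.natDegree ≤ 2) (ha : f.IsRoot a) : f.Splits := by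
  rw [← mul_divByMonic_eq_iff_isRoot.2 ha, splits_X_sub_C_mul_iff]
  refine Splits.of_natDegree_le_one ?_
  rw [natDegree_divByMonic _ (monic_X_sub_C a), natDegree_X_sub_C]
  omega

theorem splits_X_sub_C_mul_one_add_X_sq {a : ℝ} (ha : a ≤ 0) :
    (X - C a * (1 + X) ^ 2 : ℝ[X]).Splits := by
  have hdeg : (X - C a * (1 + X) ^ 2 : ℝ[X]).natDegree ≤ 2 := by compute_degree
  obtain ⟨x, -, hx⟩ := intermediate_value_Icc (by norm_num : (-1 : ℝ) ≤ 0)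
    (X - C a * (1 + X) ^ 2 : ℝ[X]).continuousOn (show (0 : ℝ) ∈ Set.Icc _ _ by
      simp only [eval_sub, eval_mul, eval_C, eval_pow, eval_add, eval_one, eval_X, Set.mem_Icc]
      constructor <;> nlinarith)
  exact Splits.of_natDegree_le_two_of_isRoot hdeg hx

theorem gammaExpansion_eq_prod_roots {K : Type*} [Field K] [Infinite K] {n : ℕ} {γ : ℕ → K}
    (h : (gammaPoly (n / 2) γ).Splits) :
    gammaExpansion n γ = C (gammaPoly (n / 2) γ).leadingCoeff *
      (1 + X) ^ (n - 2 * (gammaPoly (n / 2) γ).natDegree) *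
      ((gammaPoly (n / 2) γ).roots.map fun a => X - C a * (1 + X) ^ 2).prod := by
  set Γ := gammaPoly (n / 2) γ with hΓ
  have hd : 2 * Γ.natDegree ≤ n := by
    have : Γ.natDegree ≤ n / 2 := natDegree_gammaPoly_le (n / 2) γ
    omega
  apply eq_of_infinite_eval_eq
  refine ((Set.finite_singleton (-1 : K)).infinite_compl).mono fun x hx => ?_
  have hx : 1 + x ≠ 0 := fun h => hx (Set.mem_singleton_iff.2 (by linear_combination h))
  have hfactor : ∀ a, x - a * (1 + x) ^ 2 = (1 + x) ^ 2 * (x / (1 + x) ^ 2 - a) :=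
    fun a => by field_simp
  have hpow : (1 + x) ^ n = (1 + x) ^ (n - 2 * Γ.natDegree) * ((1 + x) ^ 2) ^ Γ.natDegree := by
    rw [← pow_mul, ← pow_add, Nat.sub_add_cancel hd]
  simp only [Set.mem_ofPred_eq, eval_mul, eval_C, eval_pow, eval_add, eval_one, eval_X,
    eval_multiset_prod, Multiset.map_map, Function.comp_def, eval_sub]
  rw [← coe_aeval_eq_eval, aeval_gammaExpansion n γ hx, coe_aeval_eq_eval, ← hΓ,
    h.eval_eq_prod_roots]
  simp only [hfactor, Multiset.prod_map_mul, Multiset.map_const', Multiset.prod_replicate,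
    ← h.natDegree_eq_card_roots, hpow]
  ring

theorem splits_gammaExpansion_of_splits_gammaPoly {n : ℕ} {γ : ℕ → ℝ} (hγ : ∀ i, 0 ≤ γ i)
    (hne : ∃ i ≤ n / 2, γ i ≠ 0) (h : (gammaPoly (n / 2) γ).Splits) :
    (gammaExpansion n γ).Splits := by
  have hroots : ∀ a ∈ (gammaPoly (n / 2) γ).roots, a ≤ 0 := fun a ha =>
    not_lt.1 fun hpos => (eval_gammaPoly_pos hγ hne hpos).ne' (isRoot_of_mem_roots ha)
  rw [gammaExpansion_eq_prod_roots h]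
  refine ((Splits.C _).mul ((Splits.of_degree_le_one ?_).pow _)).mul (Splits.multisetProd ?_)
  · compute_degree
  · simp only [Multiset.mem_map]
    rintro _ ⟨a, ha, rfl⟩
    exact splits_X_sub_C_mul_one_add_X_sq (hroots a ha)

theorem splits_gammaPoly_of_splits_gammaExpansion {K : Type*} [Field K] {n : ℕ} {γ : ℕ → K}
    (h0 : gammaExpansion n γ ≠ 0) (h : (gammaExpansion n γ).Splits) :
    (gammaPoly (n / 2) γ).Splits := by
  let L := AlgebraicClosure K
  refine Splits.of_splits_map (algebraMap K L) (IsAlgClosed.splits _) fun z hz => ?_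
  rcases eq_or_ne z 0 with rfl | hz0
  · exact zero_mem _
  have hzroot : aeval z (gammaPoly (n / 2) γ) = 0 := by
    rw [← eval_map_algebraMap]; exact isRoot_of_mem_roots hz
  -- solving `z = x / (1 + x) ^ 2` for `x` in the algebraic closure
  obtain ⟨x, hx⟩ : ∃ x : L, z * (1 + x) ^ 2 - x = 0 := by
    have hquad : (C z * (1 + X) ^ 2 - X : L[X]) = C z * X ^ 2 + C (2 * z - 1) * X + C z := by
      simp only [map_sub, map_mul, map_ofNat, map_one]; ring
    obtain ⟨x, hx⟩ := IsAlgClosed.exists_root (C z * (1 + X) ^ 2 - X : L[X])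
      (by rw [hquad, degree_quadratic hz0]; norm_num)
    exact ⟨x, by simpa using hx⟩
  have h1x : 1 + x ≠ 0 := by
    intro h1
    have hx0 : x = 0 := by simpa [h1] using hx
    simp [hx0] at h1
  have hzx : z = x / (1 + x) ^ 2 := by
    rw [eq_div_iff (pow_ne_zero 2 h1x)]; linear_combination hx
  obtain ⟨y, rfl⟩ : x ∈ (algebraMap K L).range := h.mem_range_of_isRoot h0 (by
    rw [IsRoot, eval_map_algebraMap, aeval_gammaExpansion n γ h1x, ← hzx, hzroot, mul_zero])
  exact ⟨y / (1 + y) ^ 2, by rw [hzx]; simp⟩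

end Polynomial

/-- A `γ`-positive polynomial `f(x) = ∑_{i=0}^{⌊n/2⌋} γ_i x^i (1+x)^{n-2i}` with
all `γ_i ≥ 0`, not all zero, is real-rooted if and only if its `γ`-polynomial
`γ(x) = ∑_{i=0}^{⌊n/2⌋} γ_i x^i` is real-rooted. -/
theorem gamma_positive_real_rooted_iff (n : ℕ) (γ : ℕ → ℝ)
    (hnonneg : ∀ i, 0 ≤ γ i) (hne : ∃ i ≤ n / 2, γ i ≠ 0) :
    RealRooted (∑ i ∈ Finset.range (n / 2 + 1),
        C (γ i) * X ^ i * (1 + X) ^ (n - 2 * i)) ↔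
      RealRooted (∑ i ∈ Finset.range (n / 2 + 1), C (γ i) * X ^ i) := by
  rw [realRooted_iff_splits, realRooted_iff_splits]
  exact ⟨splits_gammaPoly_of_splits_gammaExpansion (gammaExpansion_ne_zero hnonneg hne),
    splits_gammaExpansion_of_splits_gammaPoly hnonneg hne⟩
end
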